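/- Let 𝔾_{1,g} be the k-uniform hypergraph obtained by identifying a vertex u of a k-uniform hypergraph G with the vertex v₁ of the k-uniform g-hypercycle 𝒞_g, and let 𝔾_{2,g} be obtained by identifying u with the vertex v_{a(1,1)} ∈ e₁ \ {v₁,v₂} of 𝒞_g. If G has at least one edge, then ρ(𝔾_{2,g}) < ρ(𝔾_{1,g}). -/

import Mathlib

open Finset

/-- A hypergraph on a finite vertex type `V`: a finite set of edges,
each edge a subset of `V` with at least two vertices. -/
structure UHypergraph (V : Type*) [DecidableEq V] [Fintype V] where
  edges : Finset (Finset V)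
  two_le_card : ∀ e ∈ edges, 2 ≤ e.card

namespace UHypergraph

variable {V : Type*} [DecidableEq V] [Fintype V]

/-- The adjacency matrix `(A_G)_{ij} = ∑_{e ∋ i,j} 1/(|e|-1)` (zero on the diagonal). -/
noncomputable def adjMatrix (G : UHypergraph V) : Matrix V V ℝ :=
  Matrix.of fun i j => if i = j then 0 else
    ∑ e ∈ G.edges.filter (fun e => i ∈ e ∧ j ∈ e), (1 : ℝ) / ((e.card : ℝ) - 1)

/-- The spectral radius: the maximum modulus of an eigenvalue of the
(real symmetric) adjacency matrix. -/
noncomputable def spectralRadius (G : UHypergraph V) : ℝ :=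
  sSup {r : ℝ | ∃ (μ : ℝ) (x : V → ℝ), x ≠ 0 ∧ G.adjMatrix.mulVec x = μ • x ∧ r = |μ|}

/-- `G` is `k`-uniform. -/
def IsUniform (G : UHypergraph V) (k : ℕ) : Prop := ∀ e ∈ G.edges, e.card = k

/-- `G` is connected. -/
def IsConnected (G : UHypergraph V) : Prop :=
  Nonempty V ∧ ∀ u v : V,
    Relation.ReflTransGen (fun a b => ∃ e ∈ G.edges, a ∈ e ∧ b ∈ e) u v

/-- Isomorphism of hypergraphs. -/
def Iso {W : Type*} [DecidableEq W] [Fintype W] (G : UHypergraph V) (H : UHypergraph W) : Prop :=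
  ∃ f : V ≃ W, ∀ s : Finset V, s ∈ G.edges ↔ s.image f ∈ H.edges

/-- The principal eigenvector: positive, unit norm, eigenvector for the spectral radius. -/
def IsPrincipalEigenvector (G : UHypergraph V) (X : V → ℝ) : Prop :=
  (∀ v, 0 < X v) ∧ (∑ v, X v ^ 2 = 1) ∧
    G.adjMatrix.mulVec X = G.spectralRadius • X

/-- `G` contains a hypercycle of length `g`. -/
def HasCycleOfLength (G : UHypergraph V) (g : ℕ) : Prop :=
  2 ≤ g ∧ ∃ (e : ZMod g → Finset V) (v : ZMod g → V),
    Function.Injective e ∧ Function.Injective v ∧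
    (∀ i, e i ∈ G.edges) ∧ (∀ i, v i ∈ e i ∧ v (i + 1) ∈ e i) ∧
    (∀ i j : ZMod g, i ≠ j → j ≠ i + 1 → i ≠ j + 1 → e i ∩ e j = ∅)

/-- The girth of `G` is `g`: the length of a shortest hypercycle. -/
def HasGirth (G : UHypergraph V) (g : ℕ) : Prop :=
  G.HasCycleOfLength g ∧ ∀ g', G.HasCycleOfLength g' → g ≤ g'

/-- A `k`-uniform unicyclic hypergraph: connected with `n - 1 = (k-1)m - 1`,
i.e. `n = (k-1) m`. -/
def IsUnicyclic (G : UHypergraph V) (k : ℕ) : Prop :=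
  G.IsUniform k ∧ G.IsConnected ∧ Fintype.card V = (k - 1) * G.edges.card

/-- A supertree: connected and acyclic. -/
def IsSupertree (G : UHypergraph V) (k : ℕ) : Prop :=
  G.IsUniform k ∧ G.IsConnected ∧ ∀ g, ¬ G.HasCycleOfLength g

/-- `G` is (a copy of) the `k`-uniform hypercycle with `m` edges.
The cycle vertices are `w i t` for `i : ZMod m`, `t : Fin (k-1)`, all distinct;
the `i`-th edge is `{w i 0, w i 1, …, w i (k-2), w (i+1) 0}`, and these are all
the edges and all the vertices. -/
def IsHypercycle (G : UHypergraph V) (k m : ℕ) (hk : 2 ≤ k) : Prop :=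
  ∃ w : ZMod m → Fin (k - 1) → V,
    (Function.Injective fun p : ZMod m × Fin (k - 1) => w p.1 p.2) ∧
    (∀ s : Finset V, s ∈ G.edges ↔
      ∃ i : ZMod m, s = insert (w (i + 1) ⟨0, by omega⟩) (Finset.image (w i) Finset.univ)) ∧
    (∀ x : V, ∃ p : ZMod m × Fin (k - 1), w p.1 p.2 = x)

/-- `H` is obtained from the `k`-uniform `g`-hypercycle `𝒞_g` (with cycle data `w`,
where `w i 0` plays the role of the cycle vertex `v_{i+1}` and `w i (j+1)` the role
of `v_{a(i+1,j+1)}`, cycle edge `i` being `{w i 0, …, w i (k-2), w (i+1) 0}`)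
by identifying the vertex `u` of the hypergraph `G` with the cycle vertex `w gp.1 gp.2`. -/
def IsCycleGlue {V0 : Type*} [DecidableEq V0] [Fintype V0]
    (H : UHypergraph V) (k g : ℕ) (hk : 2 ≤ k) (G : UHypergraph V0) (u : V0)
    (gp : ZMod g × Fin (k - 1)) : Prop :=
  ∃ (ι : V0 ↪ V) (w : ZMod g → Fin (k - 1) → V),
    (Function.Injective fun p : ZMod g × Fin (k - 1) => w p.1 p.2) ∧
    (∀ p : ZMod g × Fin (k - 1), (∃ y, ι y = w p.1 p.2) ↔ p = gp) ∧
    ι u = w gp.1 gp.2 ∧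
    (∀ s : Finset V, s ∈ H.edges ↔
      (∃ t ∈ G.edges, s = t.image ι) ∨
      ∃ i : ZMod g, s = insert (w (i + 1) ⟨0, by omega⟩) (Finset.image (w i) Finset.univ)) ∧
    (∀ x : V, (∃ y, ι y = x) ∨ ∃ p : ZMod g × Fin (k - 1), w p.1 p.2 = x)

/-- `H` is the `k`-uniform lollipop hypergraph: a `g`-hypercycle (cycle data `w`, as in
`IsCycleGlue`) together with a pendant hyperpath of length `s` (path data `q`,
the `j`-th path edge being `{prev, q j 0, …, q j (k-2)}` where `prev` is the gluing
vertex `w gp.1 gp.2` for `j = 0` and `q (j-1) (k-2)` otherwise). -/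
def IsLollipop (H : UHypergraph V) (k g s : ℕ) (hk : 2 ≤ k)
    (gp : ZMod g × Fin (k - 1)) : Prop :=
  ∃ (w : ZMod g → Fin (k - 1) → V) (q : Fin s → Fin (k - 1) → V),
    Function.Injective
      (Sum.elim (fun p : ZMod g × Fin (k - 1) => w p.1 p.2)
        (fun p : Fin s × Fin (k - 1) => q p.1 p.2)) ∧
    (∀ t : Finset V, t ∈ H.edges ↔
      (∃ i : ZMod g, t = insert (w (i + 1) ⟨0, by omega⟩) (Finset.image (w i) Finset.univ)) ∨
      ∃ j : Fin s, t = insert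
        (if j.1 = 0 then w gp.1 gp.2
          else q ⟨j.1 - 1, lt_of_le_of_lt (Nat.sub_le _ _) j.isLt⟩ ⟨k - 2, by omega⟩)
        (Finset.image (q j) Finset.univ)) ∧
    (∀ x : V, (∃ p : ZMod g × Fin (k - 1), w p.1 p.2 = x) ∨
      ∃ p : Fin s × Fin (k - 1), q p.1 p.2 = x)

/-- `H` is `𝒰*(n,k,g)`: a `g`-hypercycle (cycle data `w`) with `t` pendant edges
attached at the cycle vertex `v₁ = w 0 0`. -/
def IsUStar (H : UHypergraph V) (k g t : ℕ) (hk : 2 ≤ k) : Prop :=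
  ∃ (w : ZMod g → Fin (k - 1) → V) (P : Fin t → Fin (k - 1) → V),
    Function.Injective
      (Sum.elim (fun p : ZMod g × Fin (k - 1) => w p.1 p.2)
        (fun p : Fin t × Fin (k - 1) => P p.1 p.2)) ∧
    (∀ s : Finset V, s ∈ H.edges ↔
      (∃ i : ZMod g, s = insert (w (i + 1) ⟨0, by omega⟩) (Finset.image (w i) Finset.univ)) ∨
      ∃ b : Fin t, s = insert (w 0 ⟨0, by omega⟩) (Finset.image (P b) Finset.univ)) ∧
    (∀ x : V, (∃ p : ZMod g × Fin (k - 1), w p.1 p.2 = x) ∨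
      ∃ p : Fin t × Fin (k - 1), P p.1 p.2 = x)

/-- An automorphism of a hypergraph: a permutation of the vertices mapping edges
to edges. -/
def IsAutomorphism (G : UHypergraph V) (σ : Equiv.Perm V) : Prop :=
  ∀ s : Finset V, s ∈ G.edges ↔ s.image σ ∈ G.edges

/-- `H` is the `k`-th power of the ordinary (2-uniform) graph `G`:
each graph edge is enlarged by `k - 2` brand-new vertices, new vertices of
different edges being distinct. -/
def IsKthPower {V0 : Type*} [DecidableEq V0] [Fintype V0]
    (H : UHypergraph V) (k : ℕ) (G : SimpleGraph V0) : Prop :=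
  ∃ (ι : V0 ↪ V) (f : Sym2 V0 → Finset V),
    (∀ s : Finset V, s ∈ H.edges ↔ ∃ e ∈ G.edgeSet, s = f e) ∧
    (∀ e ∈ G.edgeSet, (f e).card = k) ∧
    (∀ e ∈ G.edgeSet, ∀ v : V0, ι v ∈ f e ↔ v ∈ e) ∧
    (∀ e ∈ G.edgeSet, ∀ e' ∈ G.edgeSet, e ≠ e' → ∀ x ∈ f e, x ∈ f e' → ∃ v : V0, ι v = x) ∧
    (∀ x : V, (∃ v, ι v = x) ∨ ∃ e ∈ G.edgeSet, x ∈ f e)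

/-- `G` is the hypergraph `𝒢(𝒟 vD; p, q; vH ℋ)`: disjoint copies of `D` and `Hh`
together with a pendant hyperpath of length `p` attached at (the copy of) `vD`, and a
hyperpath of length `q` joining (the copy of) `vD` to (the copy of) `vH`; all interior
path vertices are new.  Path data `t` (resp. `r`): the `j`-th edge is
`{prev, t j 0, …, t j (k-2)}` with `prev = ιD vD` for `j = 0` and `t (j-1) (k-2)`
otherwise; the last vertex of the connecting path is identified with `ιH vH`. -/
def IsTwoPathJoin {VD VH : Type*} [DecidableEq VD] [Fintype VD]
    [DecidableEq VH] [Fintype VH]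
    (G : UHypergraph V) (k p q : ℕ) (hk : 2 ≤ k)
    (D : UHypergraph VD) (vD : VD) (Hh : UHypergraph VH) (vH : VH) : Prop :=
  ∃ (ιD : VD ↪ V) (ιH : VH ↪ V)
    (t : Fin p → Fin (k - 1) → V) (r : Fin q → Fin (k - 1) → V),
    (∀ x y, ιD x ≠ ιH y) ∧
    Function.Injective
      (Sum.elim (fun a : Fin p × Fin (k - 1) => t a.1 a.2)
        (fun a : Fin q × Fin (k - 1) => r a.1 a.2)) ∧
    (∀ a : Fin p × Fin (k - 1), (∀ x, ιD x ≠ t a.1 a.2) ∧ (∀ x, ιH x ≠ t a.1 a.2)) ∧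
    (∀ a : Fin q × Fin (k - 1), (∀ x, ιD x ≠ r a.1 a.2) ∧
      ((∃ x, ιH x = r a.1 a.2) ↔ (a.1.1 = q - 1 ∧ a.2.1 = k - 2))) ∧
    (∀ hq : 0 < q, r ⟨q - 1, Nat.sub_lt hq Nat.one_pos⟩ ⟨k - 2, by omega⟩ = ιH vH) ∧
    (∀ s : Finset V, s ∈ G.edges ↔
      (∃ e ∈ D.edges, s = e.image ιD) ∨ (∃ e ∈ Hh.edges, s = e.image ιH) ∨
      (∃ j : Fin p, s = insert
        (if j.1 = 0 then ιD vD
          else t ⟨j.1 - 1, lt_of_le_of_lt (Nat.sub_le _ _) j.isLt⟩ ⟨k - 2, by omega⟩)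
        (Finset.image (t j) Finset.univ)) ∨
      (∃ j : Fin q, s = insert
        (if j.1 = 0 then ιD vD
          else r ⟨j.1 - 1, lt_of_le_of_lt (Nat.sub_le _ _) j.isLt⟩ ⟨k - 2, by omega⟩)
        (Finset.image (r j) Finset.univ))) ∧
    (∀ x : V, (∃ y, ιD y = x) ∨ (∃ y, ιH y = x) ∨
      (∃ a : Fin p × Fin (k - 1), t a.1 a.2 = x) ∨
      ∃ a : Fin q × Fin (k - 1), r a.1 a.2 = x)

end UHypergraph

/-- The permutation matrix of `σ`: `(P_σ)_{ij} = 1` iff `σ j = i`. -/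
def permMatrix {V : Type*} [DecidableEq V] [Fintype V] (σ : Equiv.Perm V) :
    Matrix V V ℝ :=
  Matrix.of fun i j => if σ j = i then (1 : ℝ) else 0

/-- The spectral radius of a real square matrix: the maximum modulus of a (real)
eigenvalue. -/
noncomputable def matSpectralRadius {n : ℕ} (A : Matrix (Fin n) (Fin n) ℝ) : ℝ :=
  sSup {r : ℝ | ∃ (μ : ℝ) (x : Fin n → ℝ), x ≠ 0 ∧ A.mulVec x = μ • x ∧ r = |μ|}



set_option linter.unusedSectionVars false

open Finset

namespace HGaux

variable {V : Type*} [Fintype V] [DecidableEq V]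

/-- quadratic form -/
noncomputable def Q (A : Matrix V V ℝ) (x : V → ℝ) : ℝ := ∑ v, x v * ∑ w, A v w * x w

lemma Q_eq (A : Matrix V V ℝ) (x : V → ℝ) : Q A x = ∑ v, x v * A.mulVec x v := rfl

noncomputable def mu [Nonempty V] {A : Matrix V V ℝ} (hA : A.IsHermitian) : ℝ :=
  Finset.univ.sup' univ_nonempty hA.eigenvalues

section spec

variable [Nonempty V] {A : Matrix V V ℝ} (hA : A.IsHermitian)

lemma eig_le_mu (i : V) : hA.eigenvalues i ≤ mu hA :=
  Finset.le_sup' _ (mem_univ i)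

/-- generic orthonormal double-sum computation -/
lemma onb_double {u : V → V → ℝ} (huv : ∀ i j, (∑ v, u i v * u j v) = if i = j then (1:ℝ) else 0)
    (c d : V → ℝ) :
    (∑ v, (∑ i, c i * u i v) * (∑ j, d j * u j v)) = ∑ i, c i * d i := by
  have h1 : ∀ v, (∑ i, c i * u i v) * (∑ j, d j * u j v)
      = ∑ i, ∑ j, c i * d j * (u i v * u j v) := by
    intro v
    rw [Finset.sum_mul_sum]
    exact Finset.sum_congr rfl fun i _ => Finset.sum_congr rfl fun j _ => by ring
  simp_rw [h1]
  rw [Finset.sum_comm]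
  have h2 : ∀ i, (∑ v, ∑ j, c i * d j * (u i v * u j v)) = c i * d i := by
    intro i
    rw [Finset.sum_comm]
    have h3 : ∀ j, (∑ v, c i * d j * (u i v * u j v)) = c i * d j * (if i = j then (1:ℝ) else 0) := by
      intro j
      rw [← Finset.mul_sum, huv i j]
    simp_rw [h3]
    simp
  simp_rw [h2]

/-- The eigen-decomposition data, in elementary sum form. -/
lemma onb_data : ∃ u : V → V → ℝ,
    (∀ i j, (∑ v, u i v * u j v) = if i = j then (1:ℝ) else 0) ∧
    (∀ i, A.mulVec (u i) = fun v => hA.eigenvalues i * u i v) ∧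
    (∀ x : V → ℝ, ∃ c : V → ℝ,
      (∀ v, x v = ∑ i, c i * u i v)) := by
  classical
  set b := hA.eigenvectorBasis with hb
  refine ⟨fun i => ⇑(b i), ?_, ?_, ?_⟩
  · intro i j
    have h := orthonormal_iff_ite.mp b.orthonormal i j
    rw [← h]
    simp [PiLp.inner_apply, RCLike.inner_apply, mul_comm]
  · intro i
    have h := hA.mulVec_eigenvectorBasis i
    funext v
    have h2 := congrFun h v
    simp only [Pi.smul_apply, smul_eq_mul] at h2
    exact h2
  · intro x
    refine ⟨fun i => b.repr (WithLp.toLp 2 x) i, fun v => ?_⟩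
    have h := b.sum_repr (WithLp.toLp 2 x)
    have h2 := congrFun (congrArg (fun (y : EuclideanSpace ℝ V) => (y : V → ℝ)) h) v
    simp only [PiLp.toLp_apply] at h2
    rw [← h2]
    have : ∀ i, (b.repr (WithLp.toLp 2 x) i • b i : EuclideanSpace ℝ V) v = b.repr (WithLp.toLp 2 x) i * b i v := by
      intro i; simp
    calc (∑ i, b.repr (WithLp.toLp 2 x) i • b i : EuclideanSpace ℝ V) v
        = ∑ i, (b.repr (WithLp.toLp 2 x) i • b i : EuclideanSpace ℝ V) v := by
          rw [WithLp.ofLp_sum]; exact Finset.sum_apply v univ _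
      _ = ∑ i, b.repr (WithLp.toLp 2 x) i * b i v := Finset.sum_congr rfl fun i _ => this i
end spec

section spec2
set_option linter.unusedSectionVars false

variable [Nonempty V] {A : Matrix V V ℝ} (hA : A.IsHermitian)

lemma master (x : V → ℝ) : ∃ (c : V → ℝ) (u : V → V → ℝ),
    (∀ v, x v = ∑ i, c i * u i v) ∧
    (∀ v, A.mulVec x v = ∑ i, (hA.eigenvalues i * c i) * u i v) ∧
    Q A x = ∑ i, hA.eigenvalues i * c i ^ 2 ∧ (∑ v, x v ^ 2) = ∑ i, c i ^ 2 := by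
  obtain ⟨u, huv, heig, hrep⟩ := onb_data hA
  obtain ⟨c, hc⟩ := hrep x
  have hAx : ∀ v, A.mulVec x v = ∑ i, (hA.eigenvalues i * c i) * u i v := by
    intro v
    have : A.mulVec x v = ∑ w, A v w * x w := rfl
    rw [this]
    have h1 : ∀ w, A v w * x w = ∑ i, c i * (A v w * u i w) := by
      intro w
      rw [hc w, Finset.mul_sum]
      exact Finset.sum_congr rfl fun i _ => by ring
    simp_rw [h1]
    rw [Finset.sum_comm]
    refine Finset.sum_congr rfl fun i _ => ?_
    rw [← Finset.mul_sum]
    have : (∑ w, A v w * u i w) = A.mulVec (u i) v := rfl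
    rw [this, heig i]
    ring
  refine ⟨c, u, hc, hAx, ?_, ?_⟩
  · rw [Q_eq]
    have h2 : ∀ v, x v * A.mulVec x v = (∑ i, c i * u i v) * (∑ j, (hA.eigenvalues j * c j) * u j v) := by
      intro v; rw [← hc v, ← hAx v]
    simp_rw [h2]
    rw [onb_double huv]
    exact Finset.sum_congr rfl fun i _ => by ring
  · have h2 : ∀ v, x v ^ 2 = (∑ i, c i * u i v) * (∑ j, c j * u j v) := by
      intro v; rw [← hc v]; ring
    simp_rw [h2]
    rw [onb_double huv]
    exact Finset.sum_congr rfl fun i _ => by ring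

lemma Q_le_mu (x : V → ℝ) : Q A x ≤ mu hA * ∑ v, x v ^ 2 := by
  obtain ⟨c, u, -, -, hQ, hP⟩ := master hA x
  rw [hQ, hP, Finset.mul_sum]
  exact Finset.sum_le_sum fun i _ =>
    mul_le_mul_of_nonneg_right (eig_le_mu hA i) (sq_nonneg _)

lemma eigvec_of_Q_eq {x : V → ℝ} (hQ : Q A x = mu hA * ∑ v, x v ^ 2) :
    A.mulVec x = mu hA • x := by
  obtain ⟨c, u, hc, hAx, hQe, hP⟩ := master hA x
  have hz : ∀ i ∈ univ, (mu hA - hA.eigenvalues i) * c i ^ 2 = 0 := by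
    have hsum : ∑ i, (mu hA - hA.eigenvalues i) * c i ^ 2 = 0 := by
      have : ∑ i, (mu hA - hA.eigenvalues i) * c i ^ 2
          = mu hA * (∑ v, x v ^ 2) - Q A x := by
        rw [hQe, hP, Finset.mul_sum, ← Finset.sum_sub_distrib]
        exact Finset.sum_congr rfl fun i _ => by ring
      rw [this, hQ]; ring
    have hnn : ∀ i ∈ univ, 0 ≤ (mu hA - hA.eigenvalues i) * c i ^ 2 := fun i _ =>
      mul_nonneg (by linarith [eig_le_mu hA i]) (sq_nonneg _)
    exact fun i hi => ((Finset.sum_eq_zero_iff_of_nonneg hnn).mp hsum) i hi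
  funext v
  rw [hAx v]
  have : ∀ i, hA.eigenvalues i * c i = mu hA * c i := by
    intro i
    rcases eq_or_ne (c i) 0 with h | h
    · rw [h]; ring
    · have := hz i (mem_univ i)
      have h2 : mu hA - hA.eigenvalues i = 0 := by
        rcases mul_eq_zero.mp this with h' | h'
        · exact h'
        · exact absurd h' (pow_ne_zero 2 h)
      rw [show hA.eigenvalues i = mu hA by linarith]
  simp_rw [this]
  have : ∑ i, mu hA * c i * u i v = mu hA * ∑ i, c i * u i v := by
    rw [Finset.mul_sum]; exact Finset.sum_congr rfl fun i _ => by ring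
  rw [this, ← hc v]
  simp

lemma exists_mu_eigvec : ∃ x : V → ℝ, (∑ v, x v ^ 2 = 1) ∧ A.mulVec x = mu hA • x := by
  obtain ⟨u, huv, heig, -⟩ := onb_data hA
  obtain ⟨i, -, hi⟩ := Finset.exists_mem_eq_sup' (univ_nonempty (α := V)) hA.eigenvalues
  refine ⟨u i, ?_, ?_⟩
  · have h0 := huv i i
    rw [if_pos rfl] at h0
    rw [← h0]
    exact Finset.sum_congr rfl fun v _ => by ring
  · rw [heig i]
    have hmu : mu hA = hA.eigenvalues i := hi
    rw [hmu]
    funext v; simp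

lemma Q_double (A : Matrix V V ℝ) (x : V → ℝ) :
    Q A x = ∑ v, ∑ w, x v * (A v w * x w) := by
  unfold Q
  exact Finset.sum_congr rfl fun v _ => by rw [Finset.mul_sum]

lemma abs_eig_le_mu (hpos : ∀ i j, 0 ≤ A i j) {μ : ℝ} {y : V → ℝ}
    (heig : A.mulVec y = μ • y) (hy : y ≠ 0) : |μ| ≤ mu hA := by
  set S := ∑ v, y v ^ 2 with hS
  have hSpos : 0 < S := by
    obtain ⟨v, hv⟩ := Function.ne_iff.mp hy
    exact Finset.sum_pos' (fun w _ => sq_nonneg _) ⟨v, mem_univ v, by have := sq_pos_of_ne_zero (show y v ≠ 0 from hv); simpa using this⟩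
  have hQy : Q A y = μ * S := by
    rw [Q_eq]
    have : ∀ v, y v * A.mulVec y v = μ * y v ^ 2 := by
      intro v; rw [heig]; simp; ring
    simp_rw [this, hS, Finset.mul_sum]
  have habs : |Q A y| ≤ Q A (fun v => |y v|) := by
    rw [Q_double, Q_double]
    calc |∑ v, ∑ w, y v * (A v w * y w)| ≤ ∑ v, |∑ w, y v * (A v w * y w)| :=
          Finset.abs_sum_le_sum_abs _ _
      _ ≤ ∑ v, ∑ w, |y v| * (A v w * |y w|) := by
          refine Finset.sum_le_sum fun v _ => ?_
          calc |∑ w, y v * (A v w * y w)| ≤ ∑ w, |y v * (A v w * y w)| :=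
                Finset.abs_sum_le_sum_abs _ _
            _ = ∑ w, |y v| * (A v w * |y w|) := by
                refine Finset.sum_congr rfl fun w _ => ?_
                rw [abs_mul, abs_mul, abs_of_nonneg (hpos v w)]
  have hQabs : Q A (fun v => |y v|) ≤ mu hA * S := by
    have := Q_le_mu hA (fun v => |y v|)
    have h2 : ∑ v, |y v| ^ 2 = S := by
      rw [hS]; exact Finset.sum_congr rfl fun v _ => sq_abs _
    rwa [h2] at this
  have : |μ| * S ≤ mu hA * S := by
    calc |μ| * S = |μ * S| := by rw [abs_mul, abs_of_pos hSpos]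
      _ = |Q A y| := by rw [hQy]
      _ ≤ Q A (fun v => |y v|) := habs
      _ ≤ mu hA * S := hQabs
  exact le_of_mul_le_mul_right this hSpos

lemma mu_nonneg (hdiag : ∀ v, A v v = 0) : 0 ≤ mu hA := by
  obtain ⟨v0⟩ := (inferInstance : Nonempty V)
  have h := Q_le_mu hA (fun w => if w = v0 then 1 else 0)
  have hQ : Q A (fun w => if w = v0 then (1:ℝ) else 0) = 0 := by
    rw [Q_double]
    refine Finset.sum_eq_zero fun v _ => Finset.sum_eq_zero fun w _ => ?_
    by_cases h1 : v = v0 <;> by_cases h2 : w = v0 <;> simp [h1, h2]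
    rw [h1, h2] at *; exact hdiag v0
  have hN : ∑ v, (if v = v0 then (1:ℝ) else 0) ^ 2 = 1 := by simp
  rw [hQ, hN] at h
  linarith

end spec2

end HGaux


set_option linter.unusedSectionVars false
set_option maxHeartbeats 1000000

open Finset

namespace UHypergraph

variable {V : Type*} [DecidableEq V] [Fintype V]

lemma adj_symm (H : UHypergraph V) (i j : V) : H.adjMatrix i j = H.adjMatrix j i := by
  unfold adjMatrix
  simp only [Matrix.of_apply]
  rcases eq_or_ne i j with h | h
  · rw [h]
  · rw [if_neg h, if_neg (Ne.symm h)]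
    congr 1
    apply Finset.filter_congr
    intro e _
    exact and_comm

lemma adj_herm (H : UHypergraph V) : H.adjMatrix.IsHermitian := by
  ext i j
  rw [Matrix.conjTranspose_apply, star_trivial]
  exact adj_symm H j i

lemma adj_nonneg (H : UHypergraph V) (i j : V) : 0 ≤ H.adjMatrix i j := by
  unfold adjMatrix
  simp only [Matrix.of_apply]
  split
  · exact le_refl 0
  · apply Finset.sum_nonneg
    intro e he
    have h2 := H.two_le_card e (mem_filter.mp he).1
    have : (2 : ℝ) ≤ (e.card : ℝ) := by exact_mod_cast h2
    apply div_nonneg <;> linarith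

lemma adj_diag (H : UHypergraph V) (v : V) : H.adjMatrix v v = 0 := by
  unfold adjMatrix; simp

lemma mulVec_apply (H : UHypergraph V) (x : V → ℝ) (v : V) :
    H.adjMatrix.mulVec x v
      = ∑ e ∈ H.edges, (if v ∈ e then (1 / ((e.card : ℝ) - 1)) * ∑ j ∈ e.erase v, x j else 0) := by
  have step1 : ∀ j, H.adjMatrix v j * x j
      = ∑ e ∈ H.edges, (if j ∈ e.erase v ∧ v ∈ e then (1 / ((e.card : ℝ) - 1)) * x j else 0) := by
    intro j
    rcases eq_or_ne v j with h | h
    · rw [← h, adj_diag, zero_mul]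
      refine (Finset.sum_eq_zero fun e _ => ?_).symm
      rw [if_neg]
      rintro ⟨hj, -⟩
      exact (Finset.mem_erase.mp hj).1 rfl
    · show (if v = j then (0:ℝ) else _) * x j = _
      rw [if_neg h, Finset.sum_mul, Finset.sum_filter]
      refine Finset.sum_congr rfl fun e _ => ?_
      exact if_congr ⟨fun ⟨h1, h2⟩ => ⟨Finset.mem_erase.mpr ⟨Ne.symm h, h2⟩, h1⟩,
        fun ⟨hj, hv⟩ => ⟨hv, (Finset.mem_erase.mp hj).2⟩⟩ rfl rfl
  have step0 : H.adjMatrix.mulVec x v = ∑ j, H.adjMatrix v j * x j := rfl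
  rw [step0]
  simp_rw [step1]
  rw [Finset.sum_comm]
  refine Finset.sum_congr rfl fun e _ => ?_
  by_cases hv : v ∈ e
  · simp only [hv, and_true, if_pos]
    rw [Fintype.sum_ite_mem, Finset.mul_sum]
  · rw [if_neg hv]
    exact Finset.sum_eq_zero fun j _ => by rw [if_neg (by rintro ⟨-, h⟩; exact hv h)]

lemma Q_edges (H : UHypergraph V) (x : V → ℝ) :
    HGaux.Q H.adjMatrix x = ∑ e ∈ H.edges, (1 / ((e.card : ℝ) - 1)) *
      ((∑ v ∈ e, x v) ^ 2 - ∑ v ∈ e, x v ^ 2) := by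
  rw [HGaux.Q_eq]
  simp_rw [mulVec_apply]
  have h1 : ∀ v, x v * (∑ e ∈ H.edges,
      (if v ∈ e then (1 / ((e.card : ℝ) - 1)) * ∑ j ∈ e.erase v, x j else 0))
      = ∑ e ∈ H.edges, (if v ∈ e then x v * ((1 / ((e.card : ℝ) - 1)) * ∑ j ∈ e.erase v, x j) else 0) := by
    intro v
    rw [Finset.mul_sum]
    exact Finset.sum_congr rfl fun e _ => by rw [mul_ite, mul_zero]
  simp_rw [h1]
  rw [Finset.sum_comm]
  refine Finset.sum_congr rfl fun e _ => ?_
  rw [Fintype.sum_ite_mem]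
  have h2 : ∀ v ∈ e, x v * ((1 / ((e.card : ℝ) - 1)) * ∑ j ∈ e.erase v, x j)
      = (1 / ((e.card : ℝ) - 1)) * (x v * (∑ w ∈ e, x w) - x v ^ 2) := by
    intro v hv
    have h3 : ∑ j ∈ e.erase v, x j = (∑ w ∈ e, x w) - x v := by
      have := Finset.sum_erase_add e x hv
      linarith
    rw [h3]; ring
  rw [Finset.sum_congr rfl h2, ← Finset.mul_sum]
  congr 1
  rw [Finset.sum_sub_distrib, ← Finset.sum_mul]
  ring

lemma rho_eq (H : UHypergraph V) [Nonempty V] :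
    H.spectralRadius = HGaux.mu (adj_herm H) := by
  have hub : ∀ r ∈ {r : ℝ | ∃ (μ : ℝ) (x : V → ℝ), x ≠ 0 ∧
      H.adjMatrix.mulVec x = μ • x ∧ r = |μ|}, r ≤ HGaux.mu (adj_herm H) := by
    rintro r ⟨μ, x, hx, heig, rfl⟩
    exact HGaux.abs_eig_le_mu (adj_herm H) (adj_nonneg H) heig hx
  have hmem : HGaux.mu (adj_herm H) ∈ {r : ℝ | ∃ (μ : ℝ) (x : V → ℝ), x ≠ 0 ∧
      H.adjMatrix.mulVec x = μ • x ∧ r = |μ|} := by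
    obtain ⟨x, hx1, hxe⟩ := HGaux.exists_mu_eigvec (adj_herm H)
    refine ⟨HGaux.mu (adj_herm H), x, ?_, hxe, ?_⟩
    · intro h0
      rw [h0] at hx1
      simp at hx1
    · rw [abs_of_nonneg (HGaux.mu_nonneg (adj_herm H) (adj_diag H))]
  unfold spectralRadius
  apply le_antisymm
  · exact csSup_le ⟨_, hmem⟩ hub
  · exact le_csSup ⟨_, hub⟩ hmem

lemma rayleigh_le (H : UHypergraph V) [Nonempty V] (x : V → ℝ) :
    HGaux.Q H.adjMatrix x ≤ H.spectralRadius * ∑ v, x v ^ 2 := by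
  rw [rho_eq]
  exact HGaux.Q_le_mu (adj_herm H) x

lemma eigvec_of_rayleigh (H : UHypergraph V) [Nonempty V] {x : V → ℝ}
    (hQ : HGaux.Q H.adjMatrix x = H.spectralRadius * ∑ v, x v ^ 2) :
    H.adjMatrix.mulVec x = H.spectralRadius • x := by
  rw [rho_eq] at hQ ⊢
  exact HGaux.eigvec_of_Q_eq (adj_herm H) hQ

lemma exists_perron (H : UHypergraph V) [Nonempty V] :
    ∃ Z : V → ℝ, (∀ v, 0 ≤ Z v) ∧ (∑ v, Z v ^ 2 = 1) ∧
      H.adjMatrix.mulVec Z = H.spectralRadius • Z := by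
  obtain ⟨x, hx1, hxe⟩ := HGaux.exists_mu_eigvec (adj_herm H)
  refine ⟨fun v => |x v|, fun v => abs_nonneg _, ?_, ?_⟩
  · rw [← hx1]
    exact Finset.sum_congr rfl fun v _ => sq_abs _
  · have hsq : (∑ v, |x v| ^ 2) = 1 := by
      rw [← hx1]; exact Finset.sum_congr rfl fun v _ => sq_abs _
    have hQx : HGaux.Q H.adjMatrix x = HGaux.mu (adj_herm H) := by
      rw [HGaux.Q_eq]
      have : ∀ v, x v * H.adjMatrix.mulVec x v = HGaux.mu (adj_herm H) * x v ^ 2 := by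
        intro v; rw [hxe]; simp; ring
      simp_rw [this, ← Finset.mul_sum, hx1, mul_one]
    have hge : HGaux.mu (adj_herm H) ≤ HGaux.Q H.adjMatrix (fun v => |x v|) := by
      rw [← hQx, HGaux.Q_double, HGaux.Q_double]
      refine Finset.sum_le_sum fun v _ => Finset.sum_le_sum fun w _ => ?_
      have h1 : x v * (H.adjMatrix v w * x w) ≤ |x v * (H.adjMatrix v w * x w)| := le_abs_self _
      calc x v * (H.adjMatrix v w * x w) ≤ |x v * (H.adjMatrix v w * x w)| := h1
        _ = |x v| * (H.adjMatrix v w * |x w|) := by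
            rw [abs_mul, abs_mul, abs_of_nonneg (adj_nonneg H v w)]
    have hle : HGaux.Q H.adjMatrix (fun v => |x v|) ≤ HGaux.mu (adj_herm H) := by
      have := HGaux.Q_le_mu (adj_herm H) (fun v => |x v|)
      rwa [hsq, mul_one] at this
    have heq : HGaux.Q H.adjMatrix (fun v => |x v|)
        = H.spectralRadius * ∑ v, |x v| ^ 2 := by
      rw [hsq, mul_one, rho_eq]
      linarith
    exact eigvec_of_rayleigh H heq

lemma perron_pos (H : UHypergraph V) [Nonempty V] {Z : V → ℝ}
    (hZ0 : ∀ v, 0 ≤ Z v) (hZ1 : ∑ v, Z v ^ 2 = 1)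
    (heig : H.adjMatrix.mulVec Z = H.spectralRadius • Z)
    (hconn : ∀ a b : V, Relation.ReflTransGen
      (fun a b => ∃ e ∈ H.edges, a ∈ e ∧ b ∈ e) a b) :
    ∀ v, 0 < Z v := by
  obtain ⟨v0, hv0⟩ : ∃ v, 0 < Z v := by
    by_contra h
    push_neg at h
    have hz : ∀ v, Z v = 0 := fun v => le_antisymm (h v) (hZ0 v)
    simp_rw [hz] at hZ1
    simp at hZ1
  intro v
  have hpath := hconn v0 v
  induction hpath with
  | refl => exact hv0
  | tail hp hstep ih =>
    rename_i b c
    obtain ⟨e, he, hb, hc⟩ := hstep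
    rcases eq_or_ne b c with h | h
    · rwa [← h]
    · have hcard := H.two_le_card e he
      have hwpos : 0 < 1 / ((e.card : ℝ) - 1) := by
        have : (2 : ℝ) ≤ (e.card : ℝ) := by exact_mod_cast hcard
        apply div_pos <;> linarith
      have hterm : 0 < (if c ∈ e then (1 / ((e.card : ℝ) - 1)) * ∑ j ∈ e.erase c, Z j else 0) := by
        rw [if_pos hc]
        apply mul_pos hwpos
        have hbe : b ∈ e.erase c := Finset.mem_erase.mpr ⟨h, hb⟩
        have := Finset.single_le_sum (f := Z) (fun j _ => hZ0 j) hbe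
        linarith
      have hsum : 0 < H.adjMatrix.mulVec Z c := by
        rw [mulVec_apply]
        refine Finset.sum_pos' (fun e' he' => ?_) ⟨e, he, hterm⟩
        by_cases hce : c ∈ e'
        · rw [if_pos hce]
          apply mul_nonneg
          · have h2 := H.two_le_card e' he'
            have : (2 : ℝ) ≤ (e'.card : ℝ) := by exact_mod_cast h2
            apply div_nonneg <;> linarith
          · exact Finset.sum_nonneg fun j _ => hZ0 j
        · rw [if_neg hce]
      have hc' : H.spectralRadius * Z c > 0 := by
        have := congrFun heig c
        simp only [Pi.smul_apply, smul_eq_mul] at this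
        rwa [this] at hsum
      rcases lt_or_eq_of_le (hZ0 c) with h' | h'
      · exact h'
      · rw [← h'] at hc'
        simp at hc'

end UHypergraph


set_option linter.unusedSectionVars false
set_option maxHeartbeats 1000000

open Finset

namespace UHypergraph

/-- the `i`-th cycle edge -/
def cyc {V : Type*} [DecidableEq V] {k g : ℕ} (hk3 : 3 ≤ k)
    (w : ZMod g → Fin (k - 1) → V) (i : ZMod g) : Finset V :=
  insert (w (i + 1) ⟨0, Nat.sub_pos_of_lt (by omega)⟩) (Finset.image (w i) Finset.univ)

section Glue

variable {V0 V : Type*} [DecidableEq V0] [Fintype V0] [DecidableEq V] [Fintype V]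
variable {k g : ℕ} (hk3 : 3 ≤ k) (hg2 : 2 ≤ g) [NeZero g]
variable (H : UHypergraph V) (G : UHypergraph V0) (u : V0) (hGu : G.IsUniform k)
variable (gp : ZMod g × Fin (k - 1))
variable (ι : V0 ↪ V) (w : ZMod g → Fin (k - 1) → V)

variable (hw : Function.Injective fun p : ZMod g × Fin (k - 1) => w p.1 p.2)
variable (hglue : ∀ p : ZMod g × Fin (k - 1), (∃ y, ι y = w p.1 p.2) ↔ p = gp)
variable (hιu : ι u = w gp.1 gp.2)
variable (hE : ∀ s : Finset V, s ∈ H.edges ↔ (∃ t ∈ G.edges, s = t.image ι) ∨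
    ∃ i : ZMod g, s = insert (w (i + 1) ⟨0, Nat.sub_pos_of_lt (by omega)⟩) (Finset.image (w i) Finset.univ))
variable (hCov : ∀ x : V, (∃ y, ι y = x) ∨ ∃ p : ZMod g × Fin (k - 1), w p.1 p.2 = x)

section basic

include hg2

lemma one_ne_zero' : (1 : ZMod g) ≠ 0 := by
  haveI : NeZero g := ⟨by omega⟩
  intro h
  have h2 := congrArg ZMod.val h
  rw [ZMod.val_one_eq_one_mod, ZMod.val_zero] at h2
  have h3 := Nat.mod_eq_of_lt (show 1 < g by omega)
  omega

include hw hk3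

lemma w_inj {i j : ZMod g} {s t : Fin (k - 1)} (h : w i s = w j t) :
    i = j ∧ s = t := by
  have h2 := @hw (i, s) (j, t) h
  exact ⟨congrArg Prod.fst h2, congrArg Prod.snd h2⟩

lemma mem_cyc_pair (q : ZMod g × Fin (k - 1)) (i : ZMod g) :
    w q.1 q.2 ∈ cyc hk3 w i ↔ (q = (i + 1, ⟨0, Nat.sub_pos_of_lt (by omega)⟩) ∨ q.1 = i) := by
  unfold cyc
  constructor
  · intro h
    rcases Finset.mem_insert.mp h with h | h
    · left
      obtain ⟨h1, h2⟩ := w_inj (hk3 := hk3) (hg2 := hg2) (w := w) (hw := hw) h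
      exact Prod.ext h1 h2
    · right
      obtain ⟨s, -, hs⟩ := Finset.mem_image.mp h
      exact (w_inj (hk3 := hk3) (hg2 := hg2) (w := w) (hw := hw) hs).1.symm
  · rintro (h | h)
    · rw [h]
      exact Finset.mem_insert_self _ _
    · refine Finset.mem_insert_of_mem ?_
      rw [← h]
      exact Finset.mem_image.mpr ⟨q.2, Finset.mem_univ _, rfl⟩

lemma w_succ_not_mem (i : ZMod g) :
    w (i + 1) (⟨0, Nat.sub_pos_of_lt (by omega)⟩ : Fin (k - 1)) ∉ Finset.image (w i) Finset.univ := by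
  intro h
  obtain ⟨s, -, hs⟩ := Finset.mem_image.mp h
  have h1 : i = i + 1 := (w_inj (hk3 := hk3) (hg2 := hg2) (w := w) (hw := hw) hs).1
  have h2 : (1 : ZMod g) ≠ 0 := one_ne_zero' hg2
  apply h2
  have h3 := h1.symm
  rwa [add_eq_left] at h3

lemma card_cyc (i : ZMod g) : (cyc hk3 w i).card = k := by
  unfold cyc
  rw [Finset.card_insert_of_notMem (w_succ_not_mem (hk3 := hk3) (hg2 := hg2) (w := w) (hw := hw) i),
    Finset.card_image_of_injective _ (fun s t hst => (w_inj (hk3 := hk3) (hg2 := hg2) (w := w) (hw := hw) hst).2)]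
  simp only [Finset.card_univ, Fintype.card_fin]
  omega

lemma sum_cyc (f : V → ℝ) (i : ZMod g) :
    ∑ v ∈ cyc hk3 w i, f v = f (w (i + 1) ⟨0, Nat.sub_pos_of_lt (by omega)⟩) + ∑ s, f (w i s) := by
  unfold cyc
  rw [Finset.sum_insert (w_succ_not_mem (hk3 := hk3) (hg2 := hg2) (w := w) (hw := hw) i),
    Finset.sum_image (fun s _ t _ hst => (w_inj (hk3 := hk3) (hg2 := hg2) (w := w) (hw := hw) hst).2)]

end basic

section edges

include hk3 hg2 hw hglue

lemma not_mem_image_of_ne_gp (q : ZMod g × Fin (k - 1)) (hq : q ≠ gp) (t : Finset V0) :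
    w q.1 q.2 ∉ t.image ι := by
  intro h
  obtain ⟨y, -, hy⟩ := Finset.mem_image.mp h
  exact hq ((hglue q).mp ⟨y, hy⟩)

include hE

lemma cyc_mem_edges (i : ZMod g) : cyc hk3 w i ∈ H.edges :=
  (hE _).mpr (Or.inr ⟨i, rfl⟩)

lemma image_mem_edges {t : Finset V0} (ht : t ∈ G.edges) : t.image ι ∈ H.edges :=
  (hE _).mpr (Or.inl ⟨t, ht, rfl⟩)

lemma cyc_injective : Function.Injective (cyc (g := g) hk3 w) := by
  intro i j hij
  have hp1 : (⟨1, by omega⟩ : Fin (k - 1)) ≠ (⟨0, by omega⟩ : Fin (k - 1)) := by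
    intro h; simpa using congrArg Fin.val h
  have h1 : w i (⟨1, by omega⟩ : Fin (k-1)) ∈ cyc hk3 w i :=
    (mem_cyc_pair (hk3 := hk3) (hg2 := hg2) (w := w) (hw := hw) (i, ⟨1, by omega⟩) i).mpr (Or.inr rfl)
  rw [hij] at h1
  rcases (mem_cyc_pair (hk3 := hk3) (hg2 := hg2) (w := w) (hw := hw) (i, ⟨1, by omega⟩) j).mp h1 with h | h
  · exact absurd (congrArg Prod.snd h) hp1
  · exact h

lemma image_ne_cyc {t : Finset V0} (ht : t ∈ G.edges) (i : ZMod g) :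
    t.image ι ≠ cyc hk3 w i := by
  intro h
  have hp1 : ((i, ⟨1, by omega⟩) : ZMod g × Fin (k-1)) ≠ ((i, ⟨0, by omega⟩) : ZMod g × Fin (k-1)) := by
    intro hh
    simpa using congrArg (fun q => (Prod.snd q : Fin (k-1)).val) hh
  have h0 : w i (⟨0, by omega⟩ : Fin (k-1)) ∈ t.image ι := by
    rw [h]
    exact (mem_cyc_pair (hk3 := hk3) (hg2 := hg2) (w := w) (hw := hw) (i, ⟨0, by omega⟩) i).mpr (Or.inr rfl)
  have h1 : w i (⟨1, by omega⟩ : Fin (k-1)) ∈ t.image ι := by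
    rw [h]
    exact (mem_cyc_pair (hk3 := hk3) (hg2 := hg2) (w := w) (hw := hw) (i, ⟨1, by omega⟩) i).mpr (Or.inr rfl)
  obtain ⟨y0, -, hy0⟩ := Finset.mem_image.mp h0
  obtain ⟨y1, -, hy1⟩ := Finset.mem_image.mp h1
  have e0 : ((i, ⟨0, by omega⟩) : ZMod g × Fin (k-1)) = gp := (hglue _).mp ⟨y0, hy0⟩
  have e1 : ((i, ⟨1, by omega⟩) : ZMod g × Fin (k-1)) = gp := (hglue _).mp ⟨y1, hy1⟩
  exact hp1 (e1.trans e0.symm)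

/-- Master decomposition of sums over edges. -/
lemma edges_decomp (F : Finset V → ℝ) :
    ∑ e ∈ H.edges, F e = (∑ t ∈ G.edges, F (t.image ι)) + ∑ i : ZMod g, F (cyc hk3 w i) := by
  classical
  have hset : H.edges = (G.edges.image fun t => t.image ι) ∪ (Finset.univ.image (cyc hk3 w)) := by
    ext s
    rw [Finset.mem_union, hE s]
    simp only [Finset.mem_image, Finset.mem_univ, true_and]
    constructor
    · rintro (⟨t, ht, rfl⟩ | ⟨i, rfl⟩)
      · exact Or.inl ⟨t, ht, rfl⟩
      · exact Or.inr ⟨i, rfl⟩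
    · rintro (⟨t, ht, rfl⟩ | ⟨i, rfl⟩)
      · exact Or.inl ⟨t, ht, rfl⟩
      · exact Or.inr ⟨i, rfl⟩
  rw [hset, Finset.sum_union]
  · congr 1
    · rw [Finset.sum_image (fun t ht t' ht' h => Finset.image_injective ι.injective h)]
    · rw [Finset.sum_image (fun i _ j _ h => cyc_injective (hk3 := hk3) (hg2 := hg2) (H := H) (G := G) (gp := gp) (ι := ι) (w := w) (hw := hw) (hglue := hglue) (hE := hE) h)]
  · rw [Finset.disjoint_left]
    rintro s hs1 hs2
    obtain ⟨t, ht, rfl⟩ := Finset.mem_image.mp hs1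
    obtain ⟨i, -, hi⟩ := Finset.mem_image.mp hs2
    exact image_ne_cyc (hk3 := hk3) (hg2 := hg2) (H := H) (G := G) (gp := gp) (ι := ι) (w := w) (hw := hw) (hglue := hglue) (hE := hE) ht i hi.symm

include hGu

lemma uniform_glue : ∀ e ∈ H.edges, e.card = k := by
  intro e he
  rcases (hE e).mp he with ⟨t, ht, rfl⟩ | ⟨i, rfl⟩
  · rw [Finset.card_image_of_injective _ ι.injective]
    exact hGu t ht
  · exact card_cyc (hk3 := hk3) (hg2 := hg2) (w := w) (hw := hw) i

lemma Q_glue (x : V → ℝ) :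
    HGaux.Q H.adjMatrix x
      = (∑ t ∈ G.edges, (1 / ((k : ℝ) - 1)) *
          ((∑ y ∈ t, x (ι y)) ^ 2 - ∑ y ∈ t, (x (ι y)) ^ 2))
      + ∑ i : ZMod g, (1 / ((k : ℝ) - 1)) *
          ((x (w (i + 1) ⟨0, Nat.sub_pos_of_lt (by omega)⟩) + ∑ s, x (w i s)) ^ 2
            - ((x (w (i + 1) ⟨0, Nat.sub_pos_of_lt (by omega)⟩)) ^ 2 + ∑ s, (x (w i s)) ^ 2)) := by
  rw [Q_edges]
  have h1 : ∀ e ∈ H.edges, (1 / ((e.card : ℝ) - 1)) * ((∑ v ∈ e, x v) ^ 2 - ∑ v ∈ e, x v ^ 2)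
      = (1 / ((k : ℝ) - 1)) * ((∑ v ∈ e, x v) ^ 2 - ∑ v ∈ e, x v ^ 2) := by
    intro e he
    rw [uniform_glue (hk3 := hk3) (hg2 := hg2) (H := H) (G := G) (gp := gp) (ι := ι) (w := w) (hw := hw) (hglue := hglue) (hE := hE) (hGu := hGu) e he]
  rw [Finset.sum_congr rfl h1,
    edges_decomp (hk3 := hk3) (hg2 := hg2) (H := H) (G := G) (gp := gp) (ι := ι) (w := w) (hw := hw) (hglue := hglue) (hE := hE)]
  congr 1
  · refine Finset.sum_congr rfl fun t ht => ?_
    rw [Finset.sum_image (fun a _ b _ h => ι.injective h),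
      Finset.sum_image (fun a _ b _ h => ι.injective h)]
  · refine Finset.sum_congr rfl fun i _ => ?_
    rw [sum_cyc (hk3 := hk3) (hg2 := hg2) (w := w) (hw := hw) x i, sum_cyc (hk3 := hk3) (hg2 := hg2) (w := w) (hw := hw) (fun v => x v ^ 2) i]

lemma mulVec_glue (x : V → ℝ) (v : V) :
    H.adjMatrix.mulVec x v
      = (∑ t ∈ G.edges, (if v ∈ t.image ι then
            (1 / ((k : ℝ) - 1)) * ((∑ y ∈ t, x (ι y)) - x v) else 0))
      + ∑ i : ZMod g, (if v ∈ cyc hk3 w i then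
            (1 / ((k : ℝ) - 1)) * ((x (w (i + 1) ⟨0, Nat.sub_pos_of_lt (by omega)⟩) + ∑ s, x (w i s)) - x v) else 0) := by
  rw [mulVec_apply]
  have h1 : ∀ e ∈ H.edges, (if v ∈ e then (1 / ((e.card : ℝ) - 1)) * ∑ j ∈ e.erase v, x j else 0)
      = (if v ∈ e then (1 / ((k : ℝ) - 1)) * ((∑ j ∈ e, x j) - x v) else 0) := by
    intro e he
    by_cases hv : v ∈ e
    · rw [if_pos hv, if_pos hv, uniform_glue (hk3 := hk3) (hg2 := hg2) (H := H) (G := G) (gp := gp) (ι := ι) (w := w) (hw := hw) (hglue := hglue) (hE := hE) (hGu := hGu) e he]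
      congr 1
      have := Finset.sum_erase_add e x hv
      linarith
    · rw [if_neg hv, if_neg hv]
  rw [Finset.sum_congr rfl h1, edges_decomp (hk3 := hk3) (hg2 := hg2) (H := H) (G := G) (gp := gp) (ι := ι) (w := w) (hw := hw) (hglue := hglue) (hE := hE)]
  congr 1
  · refine Finset.sum_congr rfl fun t ht => ?_
    by_cases hv : v ∈ t.image ι
    · rw [if_pos hv, if_pos hv, Finset.sum_image (fun a _ b _ h => ι.injective h)]
    · rw [if_neg hv, if_neg hv]
  · refine Finset.sum_congr rfl fun i _ => ?_
    by_cases hv : v ∈ cyc hk3 w i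
    · rw [if_pos hv, if_pos hv, sum_cyc (hk3 := hk3) (hg2 := hg2) (w := w) (hw := hw) x i]
    · rw [if_neg hv, if_neg hv]

end edges

section conn

include hk3 hg2 hw hιu hE hCov

lemma conn_glue (hGconn : ∀ a b : V0,
      Relation.ReflTransGen (fun a b => ∃ e ∈ G.edges, a ∈ e ∧ b ∈ e) a b) :
    ∀ a b : V, Relation.ReflTransGen (fun a b => ∃ e ∈ H.edges, a ∈ e ∧ b ∈ e) a b := by
  haveI : NeZero g := ⟨by omega⟩
  set step := fun a b : V => ∃ e ∈ H.edges, a ∈ e ∧ b ∈ e with hstep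
  have hsymm : Symmetric step := by
    rintro a b ⟨e, he, ha, hb⟩
    exact ⟨e, he, hb, ha⟩
  have hsymt : Symmetric (Relation.ReflTransGen step) := by
    haveI : Std.Symm step := ⟨hsymm⟩
    exact fun a b h => Std.Symm.symm a b h
  set z : V := w 0 ⟨0, by omega⟩ with hz
  have hmem : ∀ (i : ZMod g) (s : Fin (k - 1)), w i s ∈ cyc hk3 w i := fun i s =>
    (mem_cyc_pair (hk3 := hk3) (hg2 := hg2) (w := w) (hw := hw) (i, s) i).mpr (Or.inr rfl)
  have hmem2 : ∀ i : ZMod g, w (i + 1) ⟨0, by omega⟩ ∈ cyc hk3 w i := fun i =>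
    (mem_cyc_pair (hk3 := hk3) (hg2 := hg2) (w := w) (hw := hw) (i + 1, ⟨0, by omega⟩) i).mpr (Or.inl rfl)
  have hcycE : ∀ i : ZMod g, cyc hk3 w i ∈ H.edges := fun i => (hE _).mpr (Or.inr ⟨i, rfl⟩)
  have reach0 : ∀ n : ℕ, Relation.ReflTransGen step z (w (n : ZMod g) ⟨0, by omega⟩) := by
    intro n
    induction n with
    | zero =>
      rw [Nat.cast_zero]
    | succ m ih =>
      refine ih.tail ?_
      refine ⟨cyc hk3 w (m : ZMod g), hcycE _, hmem _ _, ?_⟩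
      have : ((m + 1 : ℕ) : ZMod g) = (m : ZMod g) + 1 := by push_cast; ring
      rw [this]
      exact hmem2 _
  have reachw : ∀ (i : ZMod g) (s : Fin (k - 1)), Relation.ReflTransGen step z (w i s) := by
    intro i s
    have h1 : ((i.val : ℕ) : ZMod g) = i := ZMod.natCast_rightInverse i
    have h2 := reach0 i.val
    rw [h1] at h2
    refine h2.tail ?_
    exact ⟨cyc hk3 w i, hcycE _, hmem _ _, hmem _ _⟩
  have reachι : ∀ y : V0, Relation.ReflTransGen step z (ι y) := by
    intro y
    have h1 : Relation.ReflTransGen step (ι u) (ι y) := by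
      refine Relation.ReflTransGen.lift ι ?_ _ _ (hGconn u y)
      rintro a b ⟨e, he, ha, hb⟩
      exact ⟨e.image ι, (hE _).mpr (Or.inl ⟨e, he, rfl⟩),
        Finset.mem_image_of_mem _ ha, Finset.mem_image_of_mem _ hb⟩
    have h2 : Relation.ReflTransGen step z (ι u) := by
      rw [hιu]
      exact reachw _ _
    exact h2.trans h1
  have reachall : ∀ x : V, Relation.ReflTransGen step z x := by
    intro x
    rcases hCov x with ⟨y, rfl⟩ | ⟨p, rfl⟩
    · exact reachι y
    · exact reachw _ _
  intro a b
  exact (hsymt (reachall a)).trans (reachall b)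

end conn

end Glue

section Transport

variable {V0 V1 V2 : Type*} [DecidableEq V0] [Fintype V0]
  [DecidableEq V1] [Fintype V1] [DecidableEq V2] [Fintype V2]
variable {k g : ℕ}

open Classical in
/-- the transport bijection -/
noncomputable def glueMap (ι1 : V0 ↪ V1) (w1 : ZMod g → Fin (k - 1) → V1)
    (ι2 : V0 ↪ V2) (w2 : ZMod g → Fin (k - 1) → V2)
    (hC2 : ∀ x : V2, (∃ y, ι2 y = x) ∨ ∃ p : ZMod g × Fin (k - 1), w2 p.1 p.2 = x)
    (τ : Equiv.Perm (ZMod g × Fin (k - 1))) (x : V2) : V1 :=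
  if h : ∃ p : ZMod g × Fin (k - 1), w2 p.1 p.2 = x then
    w1 (τ.symm h.choose).1 (τ.symm h.choose).2
  else ι1 ((hC2 x).resolve_right h).choose

lemma transport (u : V0) (gp1 gp2 : ZMod g × Fin (k - 1))
    (ι1 : V0 ↪ V1) (w1 : ZMod g → Fin (k - 1) → V1)
    (ι2 : V0 ↪ V2) (w2 : ZMod g → Fin (k - 1) → V2)
    (hw1 : Function.Injective fun p : ZMod g × Fin (k - 1) => w1 p.1 p.2)
    (hglue1 : ∀ p : ZMod g × Fin (k - 1), (∃ y, ι1 y = w1 p.1 p.2) ↔ p = gp1)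
    (hι1u : ι1 u = w1 gp1.1 gp1.2)
    (hC1 : ∀ x : V1, (∃ y, ι1 y = x) ∨ ∃ p : ZMod g × Fin (k - 1), w1 p.1 p.2 = x)
    (hw2 : Function.Injective fun p : ZMod g × Fin (k - 1) => w2 p.1 p.2)
    (hglue2 : ∀ p : ZMod g × Fin (k - 1), (∃ y, ι2 y = w2 p.1 p.2) ↔ p = gp2)
    (hι2u : ι2 u = w2 gp2.1 gp2.2)
    (hC2 : ∀ x : V2, (∃ y, ι2 y = x) ∨ ∃ p : ZMod g × Fin (k - 1), w2 p.1 p.2 = x)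
    (τ : Equiv.Perm (ZMod g × Fin (k - 1))) (Z : V2 → ℝ) :
    ∃ Y : V1 → ℝ,
      (∀ p : ZMod g × Fin (k - 1), Y (w1 p.1 p.2) = Z (w2 (τ p).1 (τ p).2)) ∧
      (∀ y : V0, y ≠ u → Y (ι1 y) = Z (ι2 y)) ∧
      (∀ f : ℝ → ℝ, ∑ x, f (Y x) = ∑ x, f (Z x)) := by
  classical
  set ψ : V2 → V1 := glueMap ι1 w1 ι2 w2 hC2 τ with hψdef
  have hψw : ∀ q : ZMod g × Fin (k - 1), ψ (w2 q.1 q.2) = w1 (τ.symm q).1 (τ.symm q).2 := by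
    intro q
    have hex : ∃ p : ZMod g × Fin (k - 1), w2 p.1 p.2 = w2 q.1 q.2 := ⟨q, rfl⟩
    rw [hψdef]
    unfold glueMap
    rw [dif_pos hex]
    have : hex.choose = q := hw2 hex.choose_spec
    rw [this]
  have hψι : ∀ y : V0, y ≠ u → ψ (ι2 y) = ι1 y := by
    intro y hy
    have hnex : ¬ ∃ p : ZMod g × Fin (k - 1), w2 p.1 p.2 = ι2 y := by
      rintro ⟨p, hp⟩
      have hp2 : p = gp2 := (hglue2 p).mp ⟨y, hp.symm⟩
      rw [hp2] at hp
      rw [← hι2u] at hp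
      exact hy (ι2.injective hp.symm)
    rw [hψdef]
    unfold glueMap
    rw [dif_neg hnex]
    congr 1
    have hspec := ((hC2 (ι2 y)).resolve_right hnex).choose_spec
    exact ι2.injective hspec
  have hψu : ψ (ι2 u) = w1 (τ.symm gp2).1 (τ.symm gp2).2 := by
    rw [hι2u]
    exact hψw gp2
  have hinj : Function.Injective ψ := by
    intro x1 x2 hx
    rcases hC2 x1 with ⟨y1, rfl⟩ | ⟨q1, rfl⟩ <;> rcases hC2 x2 with ⟨y2, rfl⟩ | ⟨q2, rfl⟩
    · by_cases hy1 : y1 = u <;> by_cases hy2 : y2 = u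
      · rw [hy1, hy2]
      · rw [hy1] at hx ⊢
        rw [hψu, hψι y2 hy2] at hx
        have h2 : τ.symm gp2 = gp1 := (hglue1 _).mp ⟨y2, hx.symm⟩
        rw [h2, ← hι1u] at hx
        rw [ι1.injective hx]
      · rw [hy2] at hx ⊢
        rw [hψu, hψι y1 hy1] at hx
        have h2 : τ.symm gp2 = gp1 := (hglue1 _).mp ⟨y1, hx⟩
        rw [h2, ← hι1u] at hx
        rw [ι1.injective hx.symm]
      · rw [hψι y1 hy1, hψι y2 hy2] at hx
        rw [ι1.injective hx]
    · by_cases hy1 : y1 = u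
      · rw [hy1, hι2u]
        rw [hy1, hψu, hψw q2] at hx
        have h1 : τ.symm gp2 = τ.symm q2 := @hw1 (τ.symm gp2) (τ.symm q2) hx
        have h2 : gp2 = q2 := τ.symm.injective h1
        rw [h2]
      · rw [hψι y1 hy1, hψw q2] at hx
        have h2 : τ.symm q2 = gp1 := (hglue1 _).mp ⟨y1, hx⟩
        rw [h2, ← hι1u] at hx
        have h3 : y1 = u := ι1.injective hx
        exact absurd h3 hy1
    · by_cases hy2 : y2 = u
      · rw [hy2, hι2u]
        rw [hy2, hψu, hψw q1] at hx
        have h1 : τ.symm q1 = τ.symm gp2 := @hw1 (τ.symm q1) (τ.symm gp2) hx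
        have h2 : q1 = gp2 := τ.symm.injective h1
        rw [h2]
      · rw [hψι y2 hy2, hψw q1] at hx
        have h2 : τ.symm q1 = gp1 := (hglue1 _).mp ⟨y2, hx.symm⟩
        rw [h2, ← hι1u] at hx
        have h3 : y2 = u := ι1.injective hx.symm
        exact absurd h3 hy2
    · rw [hψw q1, hψw q2] at hx
      have h1 : τ.symm q1 = τ.symm q2 := @hw1 (τ.symm q1) (τ.symm q2) hx
      have h2 : q1 = q2 := τ.symm.injective h1
      rw [h2]
  have hsurj : Function.Surjective ψ := by
    intro x1
    rcases hC1 x1 with ⟨y, rfl⟩ | ⟨p, rfl⟩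
    · rcases eq_or_ne y u with rfl | hy
      · refine ⟨w2 (τ gp1).1 (τ gp1).2, ?_⟩
        rw [hψw (τ gp1), Equiv.symm_apply_apply, hι1u]
      · exact ⟨ι2 y, hψι y hy⟩
    · refine ⟨w2 (τ p).1 (τ p).2, ?_⟩
      rw [hψw (τ p), Equiv.symm_apply_apply]
  set e : V2 ≃ V1 := Equiv.ofBijective ψ ⟨hinj, hsurj⟩ with hedef
  have hec : ∀ x : V2, e x = ψ x := fun x => rfl
  refine ⟨fun x1 => Z (e.symm x1), ?_, ?_, ?_⟩
  · intro p
    show Z (e.symm (w1 p.1 p.2)) = Z (w2 (τ p).1 (τ p).2)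
    have h1 : w1 p.1 p.2 = e (w2 (τ p).1 (τ p).2) := by
      have h2 : e (w2 (τ p).1 (τ p).2) = ψ (w2 (τ p).1 (τ p).2) := rfl
      rw [h2, hψw (τ p), Equiv.symm_apply_apply]
    rw [h1, Equiv.symm_apply_apply]
  · intro y hy
    show Z (e.symm (ι1 y)) = Z (ι2 y)
    have h1 : ι1 y = e (ι2 y) := (hψι y hy).symm
    rw [h1, Equiv.symm_apply_apply]
  · intro f
    rw [← Equiv.sum_comp e (fun x1 => f (Z (e.symm x1)))]
    refine Finset.sum_congr rfl fun x _ => ?_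
    show f (Z (e.symm (e x))) = f (Z x)
    rw [Equiv.symm_apply_apply]

end Transport

end UHypergraph


open UHypergraph

set_option maxHeartbeats 2000000 in
/-- Gluing a hypergraph `G` (with at least one edge) to the cycle
vertex `v₁` of `𝒞_g` yields a strictly larger spectral radius than gluing it to the
vertex `v_{a(1,1)}`: `ρ(𝔾_{2,g}) < ρ(𝔾_{1,g})`. -/
theorem glue_at_cycle_vertex_beats_glue_at_edge_vertex
    {V0 V1 V2 : Type*} [DecidableEq V0] [Fintype V0]
    [DecidableEq V1] [Fintype V1] [DecidableEq V2] [Fintype V2]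
    (k g : ℕ) (hk : 3 ≤ k) (hg : 2 ≤ g)
    (G : UHypergraph V0) (u : V0) (hGu : G.IsUniform k) (hGc : G.IsConnected)
    (hGe : G.edges.Nonempty)
    (H1 : UHypergraph V1) (H2 : UHypergraph V2)
    (h1 : H1.IsCycleGlue k g (by omega) G u (0, ⟨0, by omega⟩))
    (h2 : H2.IsCycleGlue k g (by omega) G u (0, ⟨1, by omega⟩)) :
    H2.spectralRadius < H1.spectralRadius := by
  classical
  haveI : NeZero g := ⟨by omega⟩
  obtain ⟨-, hGconn⟩ := hGc
  obtain ⟨ι1, w1, hw1, hglue1, hι1u, hE1, hC1⟩ := h1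
  obtain ⟨ι2, w2, hw2, hglue2, hι2u, hE2, hC2⟩ := h2
  haveI : Nonempty V2 := ⟨w2 0 ⟨0, by omega⟩⟩
  haveI : Nonempty V1 := ⟨w1 0 ⟨0, by omega⟩⟩
  have hone : (1 : ZMod g) ≠ 0 := one_ne_zero' hg
  have hnegone : (-1 : ZMod g) ≠ 0 := by
    intro h
    exact hone (neg_eq_zero.mp h)
  have hnegadd : (-1 : ZMod g) + 1 = 0 := neg_add_cancel 1
  have hwk : 0 < 1 / ((k : ℝ) - 1) := by
    have : (3 : ℝ) ≤ (k : ℝ) := by exact_mod_cast hk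
    apply div_pos one_pos
    linarith
  have hp10 : (⟨1, by omega⟩ : Fin (k - 1)) ≠ ⟨0, by omega⟩ := by
    intro h
    simpa using congrArg Fin.val h
  -- connectivity of H2 and the Perron vector
  have hconn2 : ∀ a b : V2, Relation.ReflTransGen
      (fun a b => ∃ e ∈ H2.edges, a ∈ e ∧ b ∈ e) a b :=
    conn_glue (hk3 := hk) (hg2 := hg) (H := H2) (G := G) (u := u)
      (gp := (0, ⟨1, by omega⟩)) (ι := ι2) (w := w2) (hw := hw2) (hιu := hι2u)
      (hE := hE2) (hCov := hC2) hGconn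
  obtain ⟨Z, hZ0, hZ1, hZe⟩ := H2.exists_perron
  have hZpos : ∀ v, 0 < Z v := H2.perron_pos hZ0 hZ1 hZe hconn2
  have hQZ : HGaux.Q H2.adjMatrix Z = H2.spectralRadius := by
    rw [HGaux.Q_eq]
    have h : ∀ v, Z v * H2.adjMatrix.mulVec Z v = H2.spectralRadius * Z v ^ 2 := by
      intro v
      rw [hZe]
      simp
      ring
    simp_rw [h, ← Finset.mul_sum, hZ1, mul_one]
  have hWpos : 0 < ∑ s : Fin (k - 1), Z (w2 (-1) s) :=
    Finset.sum_pos (fun s _ => hZpos _) ⟨⟨0, by omega⟩, Finset.mem_univ _⟩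
  have hedge_u : ∃ t ∈ G.edges, u ∈ t := by
    obtain ⟨t0, ht0⟩ := hGe
    have hpos : 0 < t0.card := by
      have := G.two_le_card t0 ht0
      omega
    obtain ⟨x0, hx0⟩ := Finset.card_pos.mp hpos
    rcases Relation.ReflTransGen.cases_head (hGconn u x0) with h | ⟨c, hstep, -⟩
    · exact ⟨t0, ht0, h ▸ hx0⟩
    · obtain ⟨e, he, hu, -⟩ := hstep
      exact ⟨e, he, hu⟩
  ----------------------------------------------------------------
  -- TRANSPORT 1 : swap
  ----------------------------------------------------------------
  set τ1 : Equiv.Perm (ZMod g × Fin (k - 1)) :=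
    Equiv.swap ((0 : ZMod g), (⟨0, by omega⟩ : Fin (k - 1))) ((0 : ZMod g), ⟨1, by omega⟩)
    with hτ1def
  obtain ⟨Y, hYw, hYι, hYsum⟩ := transport u (0, ⟨0, by omega⟩) (0, ⟨1, by omega⟩)
    ι1 w1 ι2 w2 hw1 hglue1 hι1u hC1 hw2 hglue2 hι2u hC2 τ1 Z
  have ht1a : τ1 ((0 : ZMod g), (⟨0, by omega⟩ : Fin (k - 1))) = ((0 : ZMod g), ⟨1, by omega⟩) :=
    Equiv.swap_apply_left _ _
  have ht1b : τ1 ((0 : ZMod g), (⟨1, by omega⟩ : Fin (k - 1))) = ((0 : ZMod g), ⟨0, by omega⟩) :=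
    Equiv.swap_apply_right _ _
  have ht1c : ∀ q : ZMod g × Fin (k - 1), q.1 ≠ 0 → τ1 q = q := by
    intro q hq
    apply Equiv.swap_apply_of_ne_of_ne
    · intro h
      exact hq (congrArg Prod.fst h)
    · intro h
      exact hq (congrArg Prod.fst h)
  have hYw' : ∀ (i : ZMod g) (s : Fin (k - 1)), i ≠ 0 → Y (w1 i s) = Z (w2 i s) := by
    intro i s hi
    have h := hYw (i, s)
    rwa [ht1c (i, s) hi] at h
  have hY00 : Y (w1 0 ⟨0, by omega⟩) = Z (w2 0 ⟨1, by omega⟩) := by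
    have h := hYw (0, ⟨0, by omega⟩)
    rwa [ht1a] at h
  have hY01 : Y (w1 0 ⟨1, by omega⟩) = Z (w2 0 ⟨0, by omega⟩) := by
    have h := hYw (0, ⟨1, by omega⟩)
    rwa [ht1b] at h
  have hswap0 : ∀ F : ℝ → ℝ,
      (∑ s : Fin (k - 1), F (Y (w1 0 s))) = ∑ s : Fin (k - 1), F (Z (w2 0 s)) := by
    intro F
    have hstep : ∀ s : Fin (k - 1), F (Y (w1 0 s))
        = F (Z (w2 0 (Equiv.swap (⟨0, by omega⟩ : Fin (k - 1)) ⟨1, by omega⟩ s))) := by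
      intro s
      congr 1
      rcases eq_or_ne s ⟨0, by omega⟩ with rfl | h0
      · rw [Equiv.swap_apply_left]
        exact hY00
      · rcases eq_or_ne s ⟨1, by omega⟩ with rfl | h1
        · rw [Equiv.swap_apply_right]
          exact hY01
        · rw [Equiv.swap_apply_of_ne_of_ne h0 h1]
          have h := hYw (0, s)
          rw [show τ1 (0, s) = (0, s) from ?_] at h
          · exact h
          · apply Equiv.swap_apply_of_ne_of_ne
            · intro hh
              exact h0 (congrArg Prod.snd hh)
            · intro hh
              exact h1 (congrArg Prod.snd hh)
    simp_rw [hstep]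
    exact Equiv.sum_comp (Equiv.swap _ _) (fun s => F (Z (w2 0 s)))
  have hswap0a : (∑ s : Fin (k - 1), Y (w1 0 s)) = ∑ s : Fin (k - 1), Z (w2 0 s) :=
    hswap0 (fun r => r)
  have hswap0b : (∑ s : Fin (k - 1), (Y (w1 0 s)) ^ 2) = ∑ s : Fin (k - 1), (Z (w2 0 s)) ^ 2 :=
    hswap0 (fun r => r ^ 2)
  have hYιall : ∀ y : V0, Y (ι1 y) = Z (ι2 y) := by
    intro y
    rcases eq_or_ne y u with rfl | hy
    · rw [hι1u, hι2u]
      exact hY00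
    · exact hYι y hy
  have hY1 : ∑ x, Y x ^ 2 = 1 := by
    have h : (∑ x, Y x ^ 2) = ∑ x, Z x ^ 2 := hYsum (fun r => r ^ 2)
    rw [h, hZ1]
  -- quadratic form of Y
  have hQ1Y : HGaux.Q H1.adjMatrix Y
      = HGaux.Q H2.adjMatrix Z
        + 2 * (1 / ((k : ℝ) - 1)) * (∑ s : Fin (k - 1), Z (w2 (-1) s))
          * (Z (w2 0 ⟨1, by omega⟩) - Z (w2 0 ⟨0, by omega⟩)) := by
    rw [Q_glue (hk3 := hk) (hg2 := hg) (H := H1) (G := G) (gp := (0, ⟨0, by omega⟩))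
      (ι := ι1) (w := w1) (hw := hw1) (hglue := hglue1) (hE := hE1) (hGu := hGu) Y,
      Q_glue (hk3 := hk) (hg2 := hg) (H := H2) (G := G) (gp := (0, ⟨1, by omega⟩))
      (ι := ι2) (w := w2) (hw := hw2) (hglue := hglue2) (hE := hE2) (hGu := hGu) Z]
    have hG : (∑ t ∈ G.edges, (1 / ((k : ℝ) - 1)) *
          ((∑ y ∈ t, Y (ι1 y)) ^ 2 - ∑ y ∈ t, (Y (ι1 y)) ^ 2))
        = ∑ t ∈ G.edges, (1 / ((k : ℝ) - 1)) *
          ((∑ y ∈ t, Z (ι2 y)) ^ 2 - ∑ y ∈ t, (Z (ι2 y)) ^ 2) := by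
      refine Finset.sum_congr rfl fun t ht => ?_
      have e1 : ∑ y ∈ t, Y (ι1 y) = ∑ y ∈ t, Z (ι2 y) :=
        Finset.sum_congr rfl fun y _ => hYιall y
      have e2 : ∑ y ∈ t, (Y (ι1 y)) ^ 2 = ∑ y ∈ t, (Z (ι2 y)) ^ 2 :=
        Finset.sum_congr rfl fun y _ => by rw [hYιall y]
      rw [e1, e2]
    rw [hG]
    have hcyc : (∑ i : ZMod g, (1 / ((k : ℝ) - 1)) *
          ((Y (w1 (i + 1) ⟨0, by omega⟩) + ∑ s, Y (w1 i s)) ^ 2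
            - ((Y (w1 (i + 1) ⟨0, by omega⟩)) ^ 2 + ∑ s, (Y (w1 i s)) ^ 2)))
        = (∑ i : ZMod g, (1 / ((k : ℝ) - 1)) *
          ((Z (w2 (i + 1) ⟨0, by omega⟩) + ∑ s, Z (w2 i s)) ^ 2
            - ((Z (w2 (i + 1) ⟨0, by omega⟩)) ^ 2 + ∑ s, (Z (w2 i s)) ^ 2)))
          + 2 * (1 / ((k : ℝ) - 1)) * (∑ s : Fin (k - 1), Z (w2 (-1) s))
            * (Z (w2 0 ⟨1, by omega⟩) - Z (w2 0 ⟨0, by omega⟩)) := by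
      set f1 : ZMod g → ℝ := fun i => (1 / ((k : ℝ) - 1)) *
          ((Y (w1 (i + 1) ⟨0, by omega⟩) + ∑ s, Y (w1 i s)) ^ 2
            - ((Y (w1 (i + 1) ⟨0, by omega⟩)) ^ 2 + ∑ s, (Y (w1 i s)) ^ 2)) with hf1
      set f2 : ZMod g → ℝ := fun i => (1 / ((k : ℝ) - 1)) *
          ((Z (w2 (i + 1) ⟨0, by omega⟩) + ∑ s, Z (w2 i s)) ^ 2
            - ((Z (w2 (i + 1) ⟨0, by omega⟩)) ^ 2 + ∑ s, (Z (w2 i s)) ^ 2)) with hf2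
      have hrest : ∑ i ∈ Finset.univ.erase (-1 : ZMod g), f1 i
          = ∑ i ∈ Finset.univ.erase (-1 : ZMod g), f2 i := by
        refine Finset.sum_congr rfl fun i hi => ?_
        have hine : i ≠ -1 := (Finset.mem_erase.mp hi).1
        have hi1 : i + 1 ≠ 0 := by
          intro h
          exact hine (eq_neg_of_add_eq_zero_left h)
        rw [hf1, hf2]
        simp only
        have hA1 : Y (w1 (i + 1) ⟨0, by omega⟩) = Z (w2 (i + 1) ⟨0, by omega⟩) :=
          hYw' _ _ hi1
        rcases eq_or_ne i 0 with rfl | hi0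
        · rw [hA1, hswap0a, hswap0b]
        · have e1 : ∑ s, Y (w1 i s) = ∑ s, Z (w2 i s) :=
            Finset.sum_congr rfl fun s _ => hYw' i s hi0
          have e2 : ∑ s, (Y (w1 i s)) ^ 2 = ∑ s, (Z (w2 i s)) ^ 2 :=
            Finset.sum_congr rfl fun s _ => by rw [hYw' i s hi0]
          rw [hA1, e1, e2]
      have hneg : f1 (-1) = f2 (-1)
          + 2 * (1 / ((k : ℝ) - 1)) * (∑ s : Fin (k - 1), Z (w2 (-1) s))
            * (Z (w2 0 ⟨1, by omega⟩) - Z (w2 0 ⟨0, by omega⟩)) := by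
        rw [hf1, hf2]
        simp only
        rw [hnegadd]
        have e1 : ∑ s, Y (w1 (-1 : ZMod g) s) = ∑ s, Z (w2 (-1 : ZMod g) s) :=
          Finset.sum_congr rfl fun s _ => hYw' _ s hnegone
        have e2 : ∑ s, (Y (w1 (-1 : ZMod g) s)) ^ 2 = ∑ s, (Z (w2 (-1 : ZMod g) s)) ^ 2 :=
          Finset.sum_congr rfl fun s _ => by rw [hYw' _ s hnegone]
        rw [hY00, e1, e2]
        ring
      calc ∑ i : ZMod g, f1 i = f1 (-1) + ∑ i ∈ Finset.univ.erase (-1 : ZMod g), f1 i :=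
            (Finset.add_sum_erase _ _ (Finset.mem_univ _)).symm
        _ = (f2 (-1) + 2 * (1 / ((k : ℝ) - 1)) * (∑ s : Fin (k - 1), Z (w2 (-1) s))
              * (Z (w2 0 ⟨1, by omega⟩) - Z (w2 0 ⟨0, by omega⟩)))
            + ∑ i ∈ Finset.univ.erase (-1 : ZMod g), f2 i := by rw [hneg, hrest]
        _ = (f2 (-1) + ∑ i ∈ Finset.univ.erase (-1 : ZMod g), f2 i)
            + 2 * (1 / ((k : ℝ) - 1)) * (∑ s : Fin (k - 1), Z (w2 (-1) s))
              * (Z (w2 0 ⟨1, by omega⟩) - Z (w2 0 ⟨0, by omega⟩)) := by ring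
        _ = _ := by rw [Finset.add_sum_erase _ _ (Finset.mem_univ _)]
    rw [hcyc]
    ring
  have key1 : H2.spectralRadius
      + 2 * (1 / ((k : ℝ) - 1)) * (∑ s : Fin (k - 1), Z (w2 (-1) s))
        * (Z (w2 0 ⟨1, by omega⟩) - Z (w2 0 ⟨0, by omega⟩)) ≤ H1.spectralRadius := by
    have h := H1.rayleigh_le Y
    rw [hY1, mul_one, hQ1Y, hQZ] at h
    exact h
  ----------------------------------------------------------------
  -- TRANSPORT 2 : identity
  ----------------------------------------------------------------
  obtain ⟨Y2, hY2w, hY2ι, hY2sum⟩ := transport u (0, ⟨0, by omega⟩) (0, ⟨1, by omega⟩)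
    ι1 w1 ι2 w2 hw1 hglue1 hι1u hC1 hw2 hglue2 hι2u hC2 (Equiv.refl _) Z
  have hY2w' : ∀ p : ZMod g × Fin (k - 1), Y2 (w1 p.1 p.2) = Z (w2 p.1 p.2) :=
    fun p => hY2w p
  have hY2u : Y2 (ι1 u) = Z (w2 0 ⟨0, by omega⟩) := by
    rw [hι1u]
    exact hY2w' (0, ⟨0, by omega⟩)
  have hY2n : ∑ x, Y2 x ^ 2 = 1 := by
    have h : (∑ x, Y2 x ^ 2) = ∑ x, Z x ^ 2 := hY2sum (fun r => r ^ 2)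
    rw [h, hZ1]
  have hterm : ∀ t ∈ G.edges,
      (1 / ((k : ℝ) - 1)) * ((∑ y ∈ t, Y2 (ι1 y)) ^ 2 - ∑ y ∈ t, (Y2 (ι1 y)) ^ 2)
        = (1 / ((k : ℝ) - 1)) * ((∑ y ∈ t, Z (ι2 y)) ^ 2 - ∑ y ∈ t, (Z (ι2 y)) ^ 2)
          + (if u ∈ t then 2 * (1 / ((k : ℝ) - 1)) * (∑ y ∈ t.erase u, Z (ι2 y))
              * (Z (w2 0 ⟨0, by omega⟩) - Z (w2 0 ⟨1, by omega⟩)) else 0) := by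
    intro t ht
    by_cases hu : u ∈ t
    · rw [if_pos hu]
      have e1 : ∑ y ∈ t, Y2 (ι1 y) = Z (w2 0 ⟨0, by omega⟩) + ∑ y ∈ t.erase u, Z (ι2 y) := by
        rw [← Finset.add_sum_erase t (fun y => Y2 (ι1 y)) hu, hY2u]
        congr 1
        refine Finset.sum_congr rfl fun y hy => hY2ι y (Finset.mem_erase.mp hy).1
      have e2 : ∑ y ∈ t, (Y2 (ι1 y)) ^ 2
          = (Z (w2 0 ⟨0, by omega⟩)) ^ 2 + ∑ y ∈ t.erase u, (Z (ι2 y)) ^ 2 := by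
        rw [← Finset.add_sum_erase t (fun y => (Y2 (ι1 y)) ^ 2) hu, hY2u]
        congr 1
        refine Finset.sum_congr rfl fun y hy => by rw [hY2ι y (Finset.mem_erase.mp hy).1]
      have e3 : ∑ y ∈ t, Z (ι2 y) = Z (w2 0 ⟨1, by omega⟩) + ∑ y ∈ t.erase u, Z (ι2 y) := by
        rw [← Finset.add_sum_erase t (fun y => Z (ι2 y)) hu, hι2u]
      have e4 : ∑ y ∈ t, (Z (ι2 y)) ^ 2
          = (Z (w2 0 ⟨1, by omega⟩)) ^ 2 + ∑ y ∈ t.erase u, (Z (ι2 y)) ^ 2 := by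
        rw [← Finset.add_sum_erase t (fun y => (Z (ι2 y)) ^ 2) hu, hι2u]
      rw [e1, e2, e3, e4]
      ring
    · rw [if_neg hu, add_zero]
      have e1 : ∑ y ∈ t, Y2 (ι1 y) = ∑ y ∈ t, Z (ι2 y) :=
        Finset.sum_congr rfl fun y hy => hY2ι y (fun h => hu (h ▸ hy))
      have e2 : ∑ y ∈ t, (Y2 (ι1 y)) ^ 2 = ∑ y ∈ t, (Z (ι2 y)) ^ 2 :=
        Finset.sum_congr rfl fun y hy => by rw [hY2ι y (fun h => hu (h ▸ hy))]
      rw [e1, e2]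
  have hQ1Y2 : HGaux.Q H1.adjMatrix Y2
      = HGaux.Q H2.adjMatrix Z
        + 2 * (Z (w2 0 ⟨0, by omega⟩) - Z (w2 0 ⟨1, by omega⟩))
          * (∑ t ∈ G.edges, (if u ∈ t then
              (1 / ((k : ℝ) - 1)) * (∑ y ∈ t.erase u, Z (ι2 y)) else 0)) := by
    rw [Q_glue (hk3 := hk) (hg2 := hg) (H := H1) (G := G) (gp := (0, ⟨0, by omega⟩))
      (ι := ι1) (w := w1) (hw := hw1) (hglue := hglue1) (hE := hE1) (hGu := hGu) Y2,
      Q_glue (hk3 := hk) (hg2 := hg) (H := H2) (G := G) (gp := (0, ⟨1, by omega⟩))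
      (ι := ι2) (w := w2) (hw := hw2) (hglue := hglue2) (hE := hE2) (hGu := hGu) Z]
    have hcyc2 : (∑ i : ZMod g, (1 / ((k : ℝ) - 1)) *
          ((Y2 (w1 (i + 1) ⟨0, by omega⟩) + ∑ s, Y2 (w1 i s)) ^ 2
            - ((Y2 (w1 (i + 1) ⟨0, by omega⟩)) ^ 2 + ∑ s, (Y2 (w1 i s)) ^ 2)))
        = ∑ i : ZMod g, (1 / ((k : ℝ) - 1)) *
          ((Z (w2 (i + 1) ⟨0, by omega⟩) + ∑ s, Z (w2 i s)) ^ 2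
            - ((Z (w2 (i + 1) ⟨0, by omega⟩)) ^ 2 + ∑ s, (Z (w2 i s)) ^ 2)) := by
      refine Finset.sum_congr rfl fun i _ => ?_
      have e1 : ∑ s, Y2 (w1 i s) = ∑ s, Z (w2 i s) :=
        Finset.sum_congr rfl fun s _ => hY2w' (i, s)
      have e2 : ∑ s, (Y2 (w1 i s)) ^ 2 = ∑ s, (Z (w2 i s)) ^ 2 :=
        Finset.sum_congr rfl fun s _ => by rw [hY2w' (i, s)]
      rw [hY2w' (i + 1, ⟨0, by omega⟩), e1, e2]
    rw [hcyc2]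
    have hGpart : (∑ t ∈ G.edges, (1 / ((k : ℝ) - 1)) *
          ((∑ y ∈ t, Y2 (ι1 y)) ^ 2 - ∑ y ∈ t, (Y2 (ι1 y)) ^ 2))
        = (∑ t ∈ G.edges, (1 / ((k : ℝ) - 1)) *
            ((∑ y ∈ t, Z (ι2 y)) ^ 2 - ∑ y ∈ t, (Z (ι2 y)) ^ 2))
          + 2 * (Z (w2 0 ⟨0, by omega⟩) - Z (w2 0 ⟨1, by omega⟩))
            * (∑ t ∈ G.edges, (if u ∈ t then
                (1 / ((k : ℝ) - 1)) * (∑ y ∈ t.erase u, Z (ι2 y)) else 0)) := by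
      rw [Finset.sum_congr rfl hterm, Finset.sum_add_distrib]
      congr 1
      have hite : ∀ t ∈ G.edges,
          (if u ∈ t then 2 * (1 / ((k : ℝ) - 1)) * (∑ y ∈ t.erase u, Z (ι2 y))
              * (Z (w2 0 ⟨0, by omega⟩) - Z (w2 0 ⟨1, by omega⟩)) else 0)
            = 2 * (Z (w2 0 ⟨0, by omega⟩) - Z (w2 0 ⟨1, by omega⟩))
              * (if u ∈ t then (1 / ((k : ℝ) - 1)) * (∑ y ∈ t.erase u, Z (ι2 y)) else 0) := by
        intro t ht
        by_cases hu : u ∈ t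
        · rw [if_pos hu, if_pos hu]
          ring
        · rw [if_neg hu, if_neg hu, mul_zero]
      rw [Finset.sum_congr rfl hite, ← Finset.mul_sum]
    rw [hGpart]
    ring
  have hSpos : 0 < ∑ t ∈ G.edges, (if u ∈ t then
      (1 / ((k : ℝ) - 1)) * (∑ y ∈ t.erase u, Z (ι2 y)) else 0) := by
    obtain ⟨t0, ht0, hut0⟩ := hedge_u
    refine Finset.sum_pos' (fun t ht => ?_) ⟨t0, ht0, ?_⟩
    · by_cases hu : u ∈ t
      · rw [if_pos hu]
        apply mul_nonneg (le_of_lt hwk)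
        exact Finset.sum_nonneg fun y _ => hZ0 _
      · rw [if_neg hu]
    · rw [if_pos hut0]
      apply mul_pos hwk
      have hcard : 0 < (t0.erase u).card := by
        rw [Finset.card_erase_of_mem hut0, hGu t0 ht0]
        omega
      obtain ⟨y0, hy0⟩ := Finset.card_pos.mp hcard
      exact Finset.sum_pos (fun y _ => hZpos _) ⟨y0, hy0⟩
  have key2 : H2.spectralRadius
      + 2 * (Z (w2 0 ⟨0, by omega⟩) - Z (w2 0 ⟨1, by omega⟩))
        * (∑ t ∈ G.edges, (if u ∈ t then
            (1 / ((k : ℝ) - 1)) * (∑ y ∈ t.erase u, Z (ι2 y)) else 0)) ≤ H1.spectralRadius := by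
    have h := H1.rayleigh_le Y2
    rw [hY2n, mul_one, hQ1Y2, hQZ] at h
    exact h
  ----------------------------------------------------------------
  -- case analysis
  ----------------------------------------------------------------
  rcases lt_trichotomy (Z (w2 0 ⟨1, by omega⟩)) (Z (w2 0 ⟨0, by omega⟩)) with hAB | hAB | hAB
  · -- A < B : use key2
    have hpos : 0 < 2 * (Z (w2 0 ⟨0, by omega⟩) - Z (w2 0 ⟨1, by omega⟩))
        * (∑ t ∈ G.edges, (if u ∈ t then
            (1 / ((k : ℝ) - 1)) * (∑ y ∈ t.erase u, Z (ι2 y)) else 0)) := by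
      apply mul_pos _ hSpos
      linarith
    linarith
  · -- A = B : contradiction argument
    have hzero : 2 * (1 / ((k : ℝ) - 1)) * (∑ s : Fin (k - 1), Z (w2 (-1) s))
        * (Z (w2 0 ⟨1, by omega⟩) - Z (w2 0 ⟨0, by omega⟩)) = 0 := by
      rw [hAB]
      ring
    have hle : H2.spectralRadius ≤ H1.spectralRadius := by linarith [key1]
    rcases lt_or_eq_of_le hle with h | heq
    · exact h
    · exfalso
      -- ρ1 = ρ2 and Y is a maximizer, hence an eigenvector of H1
      have hQr : HGaux.Q H1.adjMatrix Y = H1.spectralRadius * ∑ x, Y x ^ 2 := by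
        rw [hY1, mul_one, hQ1Y, hQZ, ← heq]
        linarith [hzero]
      have hYeig := H1.eigvec_of_rayleigh hQr
      have hL := congrFun hYeig (w1 0 ⟨1, by omega⟩)
      simp only [Pi.smul_apply, smul_eq_mul] at hL
      -- compute the eigen-equation of H1 at w1 0 p1
      have hmv : H1.adjMatrix.mulVec Y (w1 0 ⟨1, by omega⟩)
          = (1 / ((k : ℝ) - 1)) *
              ((Y (w1 (0 + 1) ⟨0, by omega⟩) + ∑ s, Y (w1 0 s)) - Y (w1 0 ⟨1, by omega⟩)) := by
        rw [mulVec_glue (hk3 := hk) (hg2 := hg) (H := H1) (G := G) (gp := (0, ⟨0, by omega⟩))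
          (ι := ι1) (w := w1) (hw := hw1) (hglue := hglue1) (hE := hE1) (hGu := hGu)
          Y (w1 0 ⟨1, by omega⟩)]
        have hg0 : (∑ t ∈ G.edges, (if w1 0 ⟨1, by omega⟩ ∈ t.image ι1 then
            (1 / ((k : ℝ) - 1)) * ((∑ y ∈ t, Y (ι1 y)) - Y (w1 0 ⟨1, by omega⟩)) else 0)) = 0 := by
          refine Finset.sum_eq_zero fun t ht => ?_
          rw [if_neg]
          exact not_mem_image_of_ne_gp (hk3 := hk) (hg2 := hg) (gp := (0, ⟨0, by omega⟩))
            (ι := ι1) (w := w1) (hw := hw1) (hglue := hglue1)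
            ((0 : ZMod g), (⟨1, by omega⟩ : Fin (k - 1)))
            (by
              intro h
              exact hp10 (congrArg Prod.snd h)) t
        rw [hg0, zero_add]
        rw [Finset.sum_eq_single_of_mem (0 : ZMod g) (Finset.mem_univ _) ?side]
        · rw [if_pos]
          exact (mem_cyc_pair (hk3 := hk) (hg2 := hg) (w := w1) (hw := hw1)
            ((0 : ZMod g), (⟨1, by omega⟩ : Fin (k - 1))) 0).mpr (Or.inr rfl)
        case side =>
          intro i _ hi
          rw [if_neg]
          intro hmem
          rcases (mem_cyc_pair (hk3 := hk) (hg2 := hg) (w := w1) (hw := hw1)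
            ((0 : ZMod g), (⟨1, by omega⟩ : Fin (k - 1))) i).mp hmem with h | h
          · exact hp10 (congrArg Prod.snd h)
          · exact hi h.symm
      -- eigen-equation of H2 at w2 0 p0
      have hR := congrFun hZe (w2 0 ⟨0, by omega⟩)
      simp only [Pi.smul_apply, smul_eq_mul] at hR
      have hmv2 : H2.adjMatrix.mulVec Z (w2 0 ⟨0, by omega⟩)
          = (1 / ((k : ℝ) - 1)) *
              ((Z (w2 0 ⟨0, by omega⟩) + ∑ s, Z (w2 (-1 : ZMod g) s)) - Z (w2 0 ⟨0, by omega⟩))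
            + (1 / ((k : ℝ) - 1)) *
              ((Z (w2 (0 + 1) ⟨0, by omega⟩) + ∑ s, Z (w2 0 s)) - Z (w2 0 ⟨0, by omega⟩)) := by
        rw [mulVec_glue (hk3 := hk) (hg2 := hg) (H := H2) (G := G) (gp := (0, ⟨1, by omega⟩))
          (ι := ι2) (w := w2) (hw := hw2) (hglue := hglue2) (hE := hE2) (hGu := hGu)
          Z (w2 0 ⟨0, by omega⟩)]
        have hg0 : (∑ t ∈ G.edges, (if w2 0 ⟨0, by omega⟩ ∈ t.image ι2 then
            (1 / ((k : ℝ) - 1)) * ((∑ y ∈ t, Z (ι2 y)) - Z (w2 0 ⟨0, by omega⟩)) else 0)) = 0 := by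
          refine Finset.sum_eq_zero fun t ht => ?_
          rw [if_neg]
          exact not_mem_image_of_ne_gp (hk3 := hk) (hg2 := hg) (gp := (0, ⟨1, by omega⟩))
            (ι := ι2) (w := w2) (hw := hw2) (hglue := hglue2)
            ((0 : ZMod g), (⟨0, by omega⟩ : Fin (k - 1)))
            (by
              intro h
              exact hp10 (congrArg Prod.snd h).symm) t
        rw [hg0, zero_add]
        set f : ZMod g → ℝ := fun i => (if w2 0 ⟨0, by omega⟩ ∈ cyc hk w2 i then
            (1 / ((k : ℝ) - 1)) *
              ((Z (w2 (i + 1) ⟨0, by omega⟩) + ∑ s, Z (w2 i s)) - Z (w2 0 ⟨0, by omega⟩))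
          else 0) with hf
        have hmem1 : w2 0 ⟨0, by omega⟩ ∈ cyc hk w2 (-1 : ZMod g) := by
          refine (mem_cyc_pair (hk3 := hk) (hg2 := hg) (w := w2) (hw := hw2)
            ((0 : ZMod g), (⟨0, by omega⟩ : Fin (k - 1))) (-1)).mpr (Or.inl ?_)
          rw [hnegadd]
        have hmem0 : w2 0 ⟨0, by omega⟩ ∈ cyc hk w2 (0 : ZMod g) :=
          (mem_cyc_pair (hk3 := hk) (hg2 := hg) (w := w2) (hw := hw2)
            ((0 : ZMod g), (⟨0, by omega⟩ : Fin (k - 1))) 0).mpr (Or.inr rfl)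
        have h0mem : (0 : ZMod g) ∈ Finset.univ.erase (-1 : ZMod g) := by
          refine Finset.mem_erase.mpr ⟨?_, Finset.mem_univ _⟩
          intro h
          exact hnegone h.symm
        have hrest : ∑ i ∈ (Finset.univ.erase (-1 : ZMod g)).erase (0 : ZMod g), f i = 0 := by
          refine Finset.sum_eq_zero fun i hi => ?_
          have hi0 : i ≠ 0 := (Finset.mem_erase.mp hi).1
          have hin : i ≠ -1 := (Finset.mem_erase.mp (Finset.mem_erase.mp hi).2).1
          rw [hf]
          simp only
          rw [if_neg]
          intro hmem
          rcases (mem_cyc_pair (hk3 := hk) (hg2 := hg) (w := w2) (hw := hw2)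
            ((0 : ZMod g), (⟨0, by omega⟩ : Fin (k - 1))) i).mp hmem with h | h
          · have h2 : (0 : ZMod g) = i + 1 := congrArg Prod.fst h
            exact hin (eq_neg_of_add_eq_zero_left h2.symm)
          · exact hi0 h.symm
        calc ∑ i : ZMod g, f i
            = f (-1) + ∑ i ∈ Finset.univ.erase (-1 : ZMod g), f i :=
              (Finset.add_sum_erase _ _ (Finset.mem_univ _)).symm
          _ = f (-1) + (f 0 + ∑ i ∈ (Finset.univ.erase (-1 : ZMod g)).erase (0 : ZMod g), f i) := by
              rw [Finset.add_sum_erase _ _ h0mem]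
          _ = f (-1) + f 0 := by rw [hrest, add_zero]
          _ = _ := by
              rw [hf]
              simp only
              rw [if_pos hmem1, if_pos hmem0, hnegadd]
      -- put the pieces together
      rw [hmv2] at hR
      have hLval : Y (w1 (0 + 1) ⟨0, by omega⟩) = Z (w2 (0 + 1) ⟨0, by omega⟩) := by
        apply hYw'
        rw [zero_add]
        exact hone
      rw [hmv, hLval, hswap0a, hY01, ← heq] at hL
      -- hL : wk * ((Z (w2 (0+1) p0) + Σ Z (w2 0 s)) - B) = ρ2 * B
      -- hR : ρ2 * B = wk * ((B + W) - B) + wk * ((Z (w2 (0+1) p0) + Σ Z (w2 0 s)) - B)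
      have hWpos' : 0 < (1 / ((k : ℝ) - 1)) * ∑ s : Fin (k - 1), Z (w2 (-1 : ZMod g) s) :=
        mul_pos hwk hWpos
      nlinarith [hL, hR, hWpos']
  · -- B < A : use key1
    have hpos : 0 < 2 * (1 / ((k : ℝ) - 1)) * (∑ s : Fin (k - 1), Z (w2 (-1) s))
        * (Z (w2 0 ⟨1, by omega⟩) - Z (w2 0 ⟨0, by omega⟩)) := by
      apply mul_pos (mul_pos (by linarith [hwk]) hWpos)
      linarith
    linarith
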